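/- arXiv:2601.10613 — 13 statements merged into one kernel-verified Lean document; each statement's English description precedes it below -/
import Mathlib

section
/- In any left-symmetric algebra over a field of characteristic 0, with [a,b] = ab - ba and {a,b} = ab + ba, the identity {{a,b},c} = -{[a,b],c} - 2{[a,c],b} + [{a,b},c] - [[a,c],b] + {a,{b,c}} - {a,[b,c]} + [a,{b,c}] holds. -/
def br {A : Type*} [NonUnitalNonAssocRing A] (a b : A) : A := a*b - b*a
def ac {A : Type*} [NonUnitalNonAssocRing A] (a b : A) : A := a*b + b*a

theorem stmt2 {K A : Type*} [Field K] [CharZero K] [NonUnitalNonAssocRing A]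
    [Module K A] [SMulCommClass K A A] [IsScalarTower K A A]
    (hLS : ∀ a b c : A, (a*b)*c - a*(b*c) = (b*a)*c - b*(a*c)) :
    ∀ a b c : A, ac (ac a b) c = -(ac (br a b) c) - (2:K) • ac (br a c) b + br (ac a b) c - br (br a c) b + ac a (ac b c) - ac a (br b c) + br a (ac b c) := by
  intro a b c
  have h1 : (b*a)*c = (a*b)*c - a*(b*c) + b*(a*c) := by
    linear_combination (norm := abel) -(hLS a b c)
  have h2 : (c*a)*b = (a*c)*b - a*(c*b) + c*(a*b) := by
    linear_combination (norm := abel) -(hLS a c b)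
  have h3 : (c*b)*a = (b*c)*a - b*(c*a) + c*(b*a) := by
    linear_combination (norm := abel) -(hLS b c a)
  simp only [br, ac, two_smul, sub_mul, add_mul, mul_sub, mul_add, smul_add, smul_sub]
  rw [h1, h2, h3]
  abel
end

section
/- In any left-symmetric algebra satisfying (ab)c - (ba)c - (ac)b + (ca)b + (bc)a - (cb)a = 0, the identity {[a,b],c} + {[b,c],a} + {[c,a],b} = 0 holds, where [x,y] = xy - yx and {x,y} = xy + yx. -/
theorem stmt4 {K A : Type*} [Field K] [CharZero K] [NonUnitalNonAssocRing A]
    [Module K A] [SMulCommClass K A A] [IsScalarTower K A A]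
    (hLS : ∀ a b c : A, (a*b)*c - a*(b*c) = (b*a)*c - b*(a*c))
    (hB : ∀ a b c : A, (a*b)*c - (b*a)*c - (a*c)*b + (c*a)*b + (b*c)*a - (c*b)*a = 0) :
    ∀ a b c : A, ac (br a b) c + ac (br b c) a + ac (br c a) b = 0 := by
  intro a b c
  simp only [br, ac]
  have h1 := hLS a b c
  have h2 := hLS b c a
  have h3 := hLS c a b
  have h4 := hB a b c
  linear_combination (norm := noncomm_ring) h4 + h4 - h1 - h2 - h3
end

section
/- In any left-symmetric algebra satisfying the right-normed identity a(bc) + b(ac) + a(cb) + c(ab) + b(ca) + c(ba) = 0, the anti-commutator satisfies {a,{b,c}} = {[a,b],c} + {[a,c],b} + [{b,c},a] + (2/3)[[a,c],b] + (1/3)[a,[b,c]]. -/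
theorem stmt5 {K A : Type*} [Field K] [CharZero K] [NonUnitalNonAssocRing A]
    [Module K A] [SMulCommClass K A A] [IsScalarTower K A A]
    (hLS : ∀ a b c : A, (a*b)*c - a*(b*c) = (b*a)*c - b*(a*c))
    (hA2 : ∀ a b c : A, a*(b*c) + b*(a*c) + a*(c*b) + c*(a*b) + b*(c*a) + c*(b*a) = 0) :
    ∀ a b c : A, ac a (ac b c) = ac (br a b) c + ac (br a c) b + br (ac b c) a + (2/3:K) • br (br a c) b + (1/3:K) • br a (br b c) := by
  intro a b c
  simp only [ac, br]
  set L : A := a * (b*c + c*b) + (b*c + c*b) * a with hLdef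
  set Y : A := ((a*b - b*a) * c + c * (a*b - b*a)) + ((a*c - c*a) * b + b * (a*c - c*a))
      + ((b*c + c*b) * a - a * (b*c + c*b)) with hYdef
  set U : A := (a*c - c*a) * b - b * (a*c - c*a) with hUdef
  set V : A := a * (b*c - c*b) - (b*c - c*b) * a with hVdef
  have e1 : ((a*b)*c - a*(b*c)) - ((b*a)*c - b*(a*c)) = 0 := sub_eq_zero_of_eq (hLS a b c)
  have e2 : ((a*c)*b - a*(c*b)) - ((c*a)*b - c*(a*b)) = 0 := sub_eq_zero_of_eq (hLS a c b)
  have e3 : ((b*c)*a - b*(c*a)) - ((c*b)*a - c*(b*a)) = 0 := sub_eq_zero_of_eq (hLS b c a)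
  have e4 : a*(b*c) + b*(a*c) + a*(c*b) + c*(a*b) + b*(c*a) + c*(b*a) = 0 := hA2 a b c
  have comb : ((2:ℤ) • U + V) - (3:ℤ) • (L - Y)
      = (3:ℤ) • (((a*b)*c - a*(b*c)) - ((b*a)*c - b*(a*c)))
      + (5:ℤ) • (((a*c)*b - a*(c*b)) - ((c*a)*b - c*(a*b)))
      + (-1:ℤ) • (((b*c)*a - b*(c*a)) - ((c*b)*a - c*(b*a)))
      + (-2:ℤ) • (a*(b*c) + b*(a*c) + a*(c*b) + c*(a*b) + b*(c*a) + c*(b*a)) := by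
    rw [hLdef, hYdef, hUdef, hVdef]
    simp only [mul_add, add_mul, mul_sub, sub_mul]
    abel
  rw [e1, e2, e3, e4] at comb
  simp only [smul_zero, add_zero, zero_add] at comb
  have main : (2:ℤ) • U + V = (3:ℤ) • (L - Y) := sub_eq_zero.mp comb
  have t2 : (2:K) • U = (2:ℤ) • U := by rw [← Int.cast_smul_eq_zsmul K]; norm_num
  have t3 : (3:K) • (L - Y) = (3:ℤ) • (L - Y) := by rw [← Int.cast_smul_eq_zsmul K]; norm_num
  have h3 : (3:K) • ((2/3:K) • U + (1/3:K) • V) = (3:K) • (L - Y) := by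
    rw [smul_add, smul_smul, smul_smul]
    norm_num
    rw [t2, t3, main]
  have h4 : (2/3:K) • U + (1/3:K) • V = L - Y :=
    smul_right_injective A (by norm_num : (3:K) ≠ 0) h3
  rw [add_assoc, h4]
  abel
end

section
/- Every alternative algebra satisfying the left-commutative identity a(bc) = b(ac) satisfies ((ba)c)d = ((ac)b)d for all a, b, c, d. -/
theorem stmt6 {K A : Type*} [Field K] [CharZero K] [NonUnitalNonAssocRing A]
    [Module K A] [SMulCommClass K A A] [IsScalarTower K A A]
    (hL : ∀ a b : A, (a*a)*b = a*(a*b)) (hR : ∀ a b : A, (a*b)*b = a*(b*b)) (hLC : ∀ a b c : A, a*(b*c) = b*(a*c)) :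
    ∀ a b c d : A, ((b*a)*c)*d = ((a*c)*b)*d := by
  have zLA : ∀ x y z : A, (x*y)*z + (y*x)*z - (x*(y*z) + y*(x*z)) = 0 := by
    intro x y z
    have e : (x*y)*z + (y*x)*z - (x*(y*z) + y*(x*z)) =
        (((x+y)*(x+y))*z - (x+y)*((x+y)*z)) - ((x*x)*z - x*(x*z)) - ((y*y)*z - y*(y*z)) := by
      simp only [add_mul, mul_add]; abel
    rw [hL (x+y) z, hL x z, hL y z] at e
    simpa using e
  have zRA : ∀ x y z : A, x*(y*z) + x*(z*y) - ((x*y)*z + (x*z)*y) = 0 := by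
    intro x y z
    have e : x*(y*z) + x*(z*y) - ((x*y)*z + (x*z)*y) =
        (x*((y+z)*(y+z)) - (x*(y+z))*(y+z)) - (x*(y*y) - (x*y)*y) - (x*(z*z) - (x*z)*z) := by
      simp only [add_mul, mul_add]; abel
    rw [hR x (y+z), hR x y, hR x z] at e
    simpa using e
  have zLC : ∀ x y z : A, x*(y*z) - y*(x*z) = 0 := by
    intro x y z; rw [hLC x y z, sub_self]
  intro a b c d
  rw [← sub_eq_zero]
  have h0 : ((a*b)*c)*d + (c*(a*b))*d - ((a*b)*(c*d) + c*((a*b)*d)) = 0 := zLA (a*b) c d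
  have h1 : ((a*b)*d)*c + (d*(a*b))*c - ((a*b)*(d*c) + d*((a*b)*c)) = 0 := zLA (a*b) d c
  have h2 : ((a*c)*b)*d + (b*(a*c))*d - ((a*c)*(b*d) + b*((a*c)*d)) = 0 := zLA (a*c) b d
  have h3 : ((a*c)*d)*b + (d*(a*c))*b - ((a*c)*(d*b) + d*((a*c)*b)) = 0 := zLA (a*c) d b
  have h4 : ((a*d)*b)*c + (b*(a*d))*c - ((a*d)*(b*c) + b*((a*d)*c)) = 0 := zLA (a*d) b c
  have h5 : ((a*d)*c)*b + (c*(a*d))*b - ((a*d)*(c*b) + c*((a*d)*b)) = 0 := zLA (a*d) c b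
  have h6 : ((b*a)*c)*d + (c*(b*a))*d - ((b*a)*(c*d) + c*((b*a)*d)) = 0 := zLA (b*a) c d
  have h7 : ((b*a)*d)*c + (d*(b*a))*c - ((b*a)*(d*c) + d*((b*a)*c)) = 0 := zLA (b*a) d c
  have h8 : ((b*c)*a)*d + (a*(b*c))*d - ((b*c)*(a*d) + a*((b*c)*d)) = 0 := zLA (b*c) a d
  have h9 : ((b*c)*d)*a + (d*(b*c))*a - ((b*c)*(d*a) + d*((b*c)*a)) = 0 := zLA (b*c) d a
  have h10 : ((b*d)*a)*c + (a*(b*d))*c - ((b*d)*(a*c) + a*((b*d)*c)) = 0 := zLA (b*d) a c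
  have h11 : ((c*a)*b)*d + (b*(c*a))*d - ((c*a)*(b*d) + b*((c*a)*d)) = 0 := zLA (c*a) b d
  have h12 : ((c*a)*d)*b + (d*(c*a))*b - ((c*a)*(d*b) + d*((c*a)*b)) = 0 := zLA (c*a) d b
  have h13 : ((c*b)*a)*d + (a*(c*b))*d - ((c*b)*(a*d) + a*((c*b)*d)) = 0 := zLA (c*b) a d
  have h14 : ((c*b)*d)*a + (d*(c*b))*a - ((c*b)*(d*a) + d*((c*b)*a)) = 0 := zLA (c*b) d a
  have h15 : ((c*d)*a)*b + (a*(c*d))*b - ((c*d)*(a*b) + a*((c*d)*b)) = 0 := zLA (c*d) a b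
  have h16 : ((d*a)*b)*c + (b*(d*a))*c - ((d*a)*(b*c) + b*((d*a)*c)) = 0 := zLA (d*a) b c
  have h17 : ((d*a)*c)*b + (c*(d*a))*b - ((d*a)*(c*b) + c*((d*a)*b)) = 0 := zLA (d*a) c b
  have h18 : ((d*b)*a)*c + (a*(d*b))*c - ((d*b)*(a*c) + a*((d*b)*c)) = 0 := zLA (d*b) a c
  have h19 : ((d*b)*c)*a + (c*(d*b))*a - ((d*b)*(c*a) + c*((d*b)*a)) = 0 := zLA (d*b) c a
  have h20 : ((d*c)*a)*b + (a*(d*c))*b - ((d*c)*(a*b) + a*((d*c)*b)) = 0 := zLA (d*c) a b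
  have h21 : ((d*c)*b)*a + (b*(d*c))*a - ((d*c)*(b*a) + b*((d*c)*a)) = 0 := zLA (d*c) b a
  have h22 : (c*d)*(a*b) + (d*c)*(a*b) - (c*(d*(a*b)) + d*(c*(a*b))) = 0 := zLA c d (a*b)
  have h23 : (b*d)*(a*c) + (d*b)*(a*c) - (b*(d*(a*c)) + d*(b*(a*c))) = 0 := zLA b d (a*c)
  have h24 : (c*d)*(b*a) + (d*c)*(b*a) - (c*(d*(b*a)) + d*(c*(b*a))) = 0 := zLA c d (b*a)
  have h25 : (a*d)*(b*c) + (d*a)*(b*c) - (a*(d*(b*c)) + d*(a*(b*c))) = 0 := zLA a d (b*c)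
  have h26 : (b*d)*(c*a) + (d*b)*(c*a) - (b*(d*(c*a)) + d*(b*(c*a))) = 0 := zLA b d (c*a)
  have h27 : (a*d)*(c*b) + (d*a)*(c*b) - (a*(d*(c*b)) + d*(a*(c*b))) = 0 := zLA a d (c*b)
  have h28 : (a*b)*(c*d) + (b*a)*(c*d) - (a*(b*(c*d)) + b*(a*(c*d))) = 0 := zLA a b (c*d)
  have h29 : (a*c)*(d*b) + (c*a)*(d*b) - (a*(c*(d*b)) + c*(a*(d*b))) = 0 := zLA a c (d*b)
  have h30 : (a*b)*(d*c) + (b*a)*(d*c) - (a*(b*(d*c)) + b*(a*(d*c))) = 0 := zLA a b (d*c)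
  have h31 : d * ((a*b)*c + (b*a)*c - (a*(b*c) + b*(a*c))) = 0 := by rw [zLA a b c, mul_zero]
  have h32 : ((a*b)*c + (b*a)*c - (a*(b*c) + b*(a*c))) * d = 0 := by rw [zLA a b c, zero_mul]
  have h33 : ((a*b)*d + (b*a)*d - (a*(b*d) + b*(a*d))) * c = 0 := by rw [zLA a b d, zero_mul]
  have h34 : d * ((a*c)*b + (c*a)*b - (a*(c*b) + c*(a*b))) = 0 := by rw [zLA a c b, mul_zero]
  have h35 : ((a*c)*b + (c*a)*b - (a*(c*b) + c*(a*b))) * d = 0 := by rw [zLA a c b, zero_mul]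
  have h36 : b * ((a*c)*d + (c*a)*d - (a*(c*d) + c*(a*d))) = 0 := by rw [zLA a c d, mul_zero]
  have h37 : ((a*c)*d + (c*a)*d - (a*(c*d) + c*(a*d))) * b = 0 := by rw [zLA a c d, zero_mul]
  have h38 : c * ((a*d)*b + (d*a)*b - (a*(d*b) + d*(a*b))) = 0 := by rw [zLA a d b, mul_zero]
  have h39 : ((a*d)*b + (d*a)*b - (a*(d*b) + d*(a*b))) * c = 0 := by rw [zLA a d b, zero_mul]
  have h40 : b * ((a*d)*c + (d*a)*c - (a*(d*c) + d*(a*c))) = 0 := by rw [zLA a d c, mul_zero]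
  have h41 : ((a*d)*c + (d*a)*c - (a*(d*c) + d*(a*c))) * b = 0 := by rw [zLA a d c, zero_mul]
  have h42 : d * ((b*c)*a + (c*b)*a - (b*(c*a) + c*(b*a))) = 0 := by rw [zLA b c a, mul_zero]
  have h43 : a * ((b*c)*d + (c*b)*d - (b*(c*d) + c*(b*d))) = 0 := by rw [zLA b c d, mul_zero]
  have h44 : ((b*d)*a + (d*b)*a - (b*(d*a) + d*(b*a))) * c = 0 := by rw [zLA b d a, zero_mul]
  have h45 : a * ((b*d)*c + (d*b)*c - (b*(d*c) + d*(b*c))) = 0 := by rw [zLA b d c, mul_zero]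
  have h46 : ((b*d)*c + (d*b)*c - (b*(d*c) + d*(b*c))) * a = 0 := by rw [zLA b d c, zero_mul]
  have h47 : b * ((c*d)*a + (d*c)*a - (c*(d*a) + d*(c*a))) = 0 := by rw [zLA c d a, mul_zero]
  have h48 : ((c*d)*a + (d*c)*a - (c*(d*a) + d*(c*a))) * b = 0 := by rw [zLA c d a, zero_mul]
  have h49 : a * ((c*d)*b + (d*c)*b - (c*(d*b) + d*(c*b))) = 0 := by rw [zLA c d b, mul_zero]
  have h50 : ((c*d)*b + (d*c)*b - (c*(d*b) + d*(c*b))) * a = 0 := by rw [zLA c d b, zero_mul]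
  have h51 : (a*c)*(b*d) + (a*c)*(d*b) - (((a*c)*b)*d + ((a*c)*d)*b) = 0 := zRA (a*c) b d
  have h52 : (a*d)*(b*c) + (a*d)*(c*b) - (((a*d)*b)*c + ((a*d)*c)*b) = 0 := zRA (a*d) b c
  have h53 : (b*a)*(c*d) + (b*a)*(d*c) - (((b*a)*c)*d + ((b*a)*d)*c) = 0 := zRA (b*a) c d
  have h54 : (b*c)*(a*d) + (b*c)*(d*a) - (((b*c)*a)*d + ((b*c)*d)*a) = 0 := zRA (b*c) a d
  have h55 : (b*d)*(a*c) + (b*d)*(c*a) - (((b*d)*a)*c + ((b*d)*c)*a) = 0 := zRA (b*d) a c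
  have h56 : (c*a)*(b*d) + (c*a)*(d*b) - (((c*a)*b)*d + ((c*a)*d)*b) = 0 := zRA (c*a) b d
  have h57 : (c*b)*(a*d) + (c*b)*(d*a) - (((c*b)*a)*d + ((c*b)*d)*a) = 0 := zRA (c*b) a d
  have h58 : (c*d)*(a*b) + (c*d)*(b*a) - (((c*d)*a)*b + ((c*d)*b)*a) = 0 := zRA (c*d) a b
  have h59 : (d*a)*(b*c) + (d*a)*(c*b) - (((d*a)*b)*c + ((d*a)*c)*b) = 0 := zRA (d*a) b c
  have h60 : b*((a*c)*d) + b*(d*(a*c)) - ((b*(a*c))*d + (b*d)*(a*c)) = 0 := zRA b (a*c) d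
  have h61 : b*((a*d)*c) + b*(c*(a*d)) - ((b*(a*d))*c + (b*c)*(a*d)) = 0 := zRA b (a*d) c
  have h62 : c*((b*a)*d) + c*(d*(b*a)) - ((c*(b*a))*d + (c*d)*(b*a)) = 0 := zRA c (b*a) d
  have h63 : a*((b*c)*d) + a*(d*(b*c)) - ((a*(b*c))*d + (a*d)*(b*c)) = 0 := zRA a (b*c) d
  have h64 : a*((b*d)*c) + a*(c*(b*d)) - ((a*(b*d))*c + (a*c)*(b*d)) = 0 := zRA a (b*d) c
  have h65 : b*((c*a)*d) + b*(d*(c*a)) - ((b*(c*a))*d + (b*d)*(c*a)) = 0 := zRA b (c*a) d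
  have h66 : a*((c*d)*b) + a*(b*(c*d)) - ((a*(c*d))*b + (a*b)*(c*d)) = 0 := zRA a (c*d) b
  have h67 : b*((d*a)*c) + b*(c*(d*a)) - ((b*(d*a))*c + (b*c)*(d*a)) = 0 := zRA b (d*a) c
  have h68 : a*((d*c)*b) + a*(b*(d*c)) - ((a*(d*c))*b + (a*b)*(d*c)) = 0 := zRA a (d*c) b
  have h69 : (a*(b*c) + a*(c*b) - ((a*b)*c + (a*c)*b)) * d = 0 := by rw [zRA a b c, zero_mul]
  have h70 : (a*(b*d) + a*(d*b) - ((a*b)*d + (a*d)*b)) * c = 0 := by rw [zRA a b d, zero_mul]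
  have h71 : d * (b*(a*c) + b*(c*a) - ((b*a)*c + (b*c)*a)) = 0 := by rw [zRA b a c, mul_zero]
  have h72 : (a*b)*(c*d) - c*((a*b)*d) = 0 := zLC (a*b) c d
  have h73 : (a*b)*(d*c) - d*((a*b)*c) = 0 := zLC (a*b) d c
  have h74 : (a*c)*(b*d) - b*((a*c)*d) = 0 := zLC (a*c) b d
  have h75 : (a*d)*(b*c) - b*((a*d)*c) = 0 := zLC (a*d) b c
  have h76 : (b*a)*(d*c) - d*((b*a)*c) = 0 := zLC (b*a) d c
  have h77 : (b*c)*(a*d) - a*((b*c)*d) = 0 := zLC (b*c) a d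
  have h78 : (b*c)*(d*a) - d*((b*c)*a) = 0 := zLC (b*c) d a
  have h79 : (b*d)*(a*c) - a*((b*d)*c) = 0 := zLC (b*d) a c
  have h80 : (c*a)*(b*d) - b*((c*a)*d) = 0 := zLC (c*a) b d
  have h81 : (c*d)*(b*a) - b*((c*d)*a) = 0 := zLC (c*d) b a
  have h82 : (d*a)*(b*c) - b*((d*a)*c) = 0 := zLC (d*a) b c
  have h83 : (d*b)*(c*a) - c*((d*b)*a) = 0 := zLC (d*b) c a
  have h84 : b*(d*(a*c)) - d*(b*(a*c)) = 0 := zLC b d (a*c)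
  have h85 : a*(d*(b*c)) - d*(a*(b*c)) = 0 := zLC a d (b*c)
  have key : (6:ℤ) • (((b*a)*c)*d - ((a*c)*b)*d) =
      (2:ℤ) • (((a*b)*c)*d + (c*(a*b))*d - ((a*b)*(c*d) + c*((a*b)*d))) +
      (-7:ℤ) • (((a*b)*d)*c + (d*(a*b))*c - ((a*b)*(d*c) + d*((a*b)*c))) +
      (-4:ℤ) • (((a*c)*b)*d + (b*(a*c))*d - ((a*c)*(b*d) + b*((a*c)*d))) +
      (-1:ℤ) • (((a*c)*d)*b + (d*(a*c))*b - ((a*c)*(d*b) + d*((a*c)*b))) +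
      (-1:ℤ) • (((a*d)*b)*c + (b*(a*d))*c - ((a*d)*(b*c) + b*((a*d)*c))) +
      (-1:ℤ) • (((a*d)*c)*b + (c*(a*d))*b - ((a*d)*(c*b) + c*((a*d)*b))) +
      (4:ℤ) • (((b*a)*c)*d + (c*(b*a))*d - ((b*a)*(c*d) + c*((b*a)*d))) +
      (1:ℤ) • (((b*a)*d)*c + (d*(b*a))*c - ((b*a)*(d*c) + d*((b*a)*c))) +
      (4:ℤ) • (((b*c)*a)*d + (a*(b*c))*d - ((b*c)*(a*d) + a*((b*c)*d))) +
      (4:ℤ) • (((b*c)*d)*a + (d*(b*c))*a - ((b*c)*(d*a) + d*((b*c)*a))) +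
      (3:ℤ) • (((b*d)*a)*c + (a*(b*d))*c - ((b*d)*(a*c) + a*((b*d)*c))) +
      (-4:ℤ) • (((c*a)*b)*d + (b*(c*a))*d - ((c*a)*(b*d) + b*((c*a)*d))) +
      (-1:ℤ) • (((c*a)*d)*b + (d*(c*a))*b - ((c*a)*(d*b) + d*((c*a)*b))) +
      (-4:ℤ) • (((c*b)*a)*d + (a*(c*b))*d - ((c*b)*(a*d) + a*((c*b)*d))) +
      (-4:ℤ) • (((c*b)*d)*a + (d*(c*b))*a - ((c*b)*(d*a) + d*((c*b)*a))) +
      (-3:ℤ) • (((c*d)*a)*b + (a*(c*d))*b - ((c*d)*(a*b) + a*((c*d)*b))) +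
      (5:ℤ) • (((d*a)*b)*c + (b*(d*a))*c - ((d*a)*(b*c) + b*((d*a)*c))) +
      (-1:ℤ) • (((d*a)*c)*b + (c*(d*a))*b - ((d*a)*(c*b) + c*((d*a)*b))) +
      (-1:ℤ) • (((d*b)*a)*c + (a*(d*b))*c - ((d*b)*(a*c) + a*((d*b)*c))) +
      (-4:ℤ) • (((d*b)*c)*a + (c*(d*b))*a - ((d*b)*(c*a) + c*((d*b)*a))) +
      (1:ℤ) • (((d*c)*a)*b + (a*(d*c))*b - ((d*c)*(a*b) + a*((d*c)*b))) +
      (4:ℤ) • (((d*c)*b)*a + (b*(d*c))*a - ((d*c)*(b*a) + b*((d*c)*a))) +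
      (1:ℤ) • ((c*d)*(a*b) + (d*c)*(a*b) - (c*(d*(a*b)) + d*(c*(a*b)))) +
      (-1:ℤ) • ((b*d)*(a*c) + (d*b)*(a*c) - (b*(d*(a*c)) + d*(b*(a*c)))) +
      (4:ℤ) • ((c*d)*(b*a) + (d*c)*(b*a) - (c*(d*(b*a)) + d*(c*(b*a)))) +
      (11:ℤ) • ((a*d)*(b*c) + (d*a)*(b*c) - (a*(d*(b*c)) + d*(a*(b*c)))) +
      (-8:ℤ) • ((b*d)*(c*a) + (d*b)*(c*a) - (b*(d*(c*a)) + d*(b*(c*a)))) +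
      (1:ℤ) • ((a*d)*(c*b) + (d*a)*(c*b) - (a*(d*(c*b)) + d*(a*(c*b)))) +
      (2:ℤ) • ((a*b)*(c*d) + (b*a)*(c*d) - (a*(b*(c*d)) + b*(a*(c*d)))) +
      (1:ℤ) • ((a*c)*(d*b) + (c*a)*(d*b) - (a*(c*(d*b)) + c*(a*(d*b)))) +
      (3:ℤ) • ((a*b)*(d*c) + (b*a)*(d*c) - (a*(b*(d*c)) + b*(a*(d*c)))) +
      (-15:ℤ) • (d * ((a*b)*c + (b*a)*c - (a*(b*c) + b*(a*c)))) +
      (4:ℤ) • (((a*b)*c + (b*a)*c - (a*(b*c) + b*(a*c))) * d) +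
      (1:ℤ) • (((a*b)*d + (b*a)*d - (a*(b*d) + b*(a*d))) * c) +
      (-1:ℤ) • (d * ((a*c)*b + (c*a)*b - (a*(c*b) + c*(a*b)))) +
      (2:ℤ) • (((a*c)*b + (c*a)*b - (a*(c*b) + c*(a*b))) * d) +
      (-2:ℤ) • (b * ((a*c)*d + (c*a)*d - (a*(c*d) + c*(a*d)))) +
      (-1:ℤ) • (((a*c)*d + (c*a)*d - (a*(c*d) + c*(a*d))) * b) +
      (-1:ℤ) • (c * ((a*d)*b + (d*a)*b - (a*(d*b) + d*(a*b)))) +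
      (-7:ℤ) • (((a*d)*b + (d*a)*b - (a*(d*b) + d*(a*b))) * c) +
      (-3:ℤ) • (b * ((a*d)*c + (d*a)*c - (a*(d*c) + d*(a*c)))) +
      (-1:ℤ) • (((a*d)*c + (d*a)*c - (a*(d*c) + d*(a*c))) * b) +
      (-4:ℤ) • (d * ((b*c)*a + (c*b)*a - (b*(c*a) + c*(b*a)))) +
      (-4:ℤ) • (a * ((b*c)*d + (c*b)*d - (b*(c*d) + c*(b*d)))) +
      (1:ℤ) • (((b*d)*a + (d*b)*a - (b*(d*a) + d*(b*a))) * c) +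
      (-1:ℤ) • (a * ((b*d)*c + (d*b)*c - (b*(d*c) + d*(b*c)))) +
      (4:ℤ) • (((b*d)*c + (d*b)*c - (b*(d*c) + d*(b*c))) * a) +
      (4:ℤ) • (b * ((c*d)*a + (d*c)*a - (c*(d*a) + d*(c*a)))) +
      (-1:ℤ) • (((c*d)*a + (d*c)*a - (c*(d*a) + d*(c*a))) * b) +
      (-1:ℤ) • (a * ((c*d)*b + (d*c)*b - (c*(d*b) + d*(c*b)))) +
      (-4:ℤ) • (((c*d)*b + (d*c)*b - (c*(d*b) + d*(c*b))) * a) +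
      (-2:ℤ) • ((a*c)*(b*d) + (a*c)*(d*b) - (((a*c)*b)*d + ((a*c)*d)*b)) +
      (-2:ℤ) • ((a*d)*(b*c) + (a*d)*(c*b) - (((a*d)*b)*c + ((a*d)*c)*b)) +
      (2:ℤ) • ((b*a)*(c*d) + (b*a)*(d*c) - (((b*a)*c)*d + ((b*a)*d)*c)) +
      (4:ℤ) • ((b*c)*(a*d) + (b*c)*(d*a) - (((b*c)*a)*d + ((b*c)*d)*a)) +
      (4:ℤ) • ((b*d)*(a*c) + (b*d)*(c*a) - (((b*d)*a)*c + ((b*d)*c)*a)) +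
      (-2:ℤ) • ((c*a)*(b*d) + (c*a)*(d*b) - (((c*a)*b)*d + ((c*a)*d)*b)) +
      (-4:ℤ) • ((c*b)*(a*d) + (c*b)*(d*a) - (((c*b)*a)*d + ((c*b)*d)*a)) +
      (-4:ℤ) • ((c*d)*(a*b) + (c*d)*(b*a) - (((c*d)*a)*b + ((c*d)*b)*a)) +
      (-2:ℤ) • ((d*a)*(b*c) + (d*a)*(c*b) - (((d*a)*b)*c + ((d*a)*c)*b)) +
      (-8:ℤ) • (b*((a*c)*d) + b*(d*(a*c)) - ((b*(a*c))*d + (b*d)*(a*c))) +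
      (-2:ℤ) • (b*((a*d)*c) + b*(c*(a*d)) - ((b*(a*d))*c + (b*c)*(a*d))) +
      (4:ℤ) • (c*((b*a)*d) + c*(d*(b*a)) - ((c*(b*a))*d + (c*d)*(b*a))) +
      (6:ℤ) • (a*((b*c)*d) + a*(d*(b*c)) - ((a*(b*c))*d + (a*d)*(b*c))) +
      (-4:ℤ) • (a*((b*d)*c) + a*(c*(b*d)) - ((a*(b*d))*c + (a*c)*(b*d))) +
      (-4:ℤ) • (b*((c*a)*d) + b*(d*(c*a)) - ((b*(c*a))*d + (b*d)*(c*a))) +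
      (-2:ℤ) • (a*((c*d)*b) + a*(b*(c*d)) - ((a*(c*d))*b + (a*b)*(c*d))) +
      (4:ℤ) • (b*((d*a)*c) + b*(c*(d*a)) - ((b*(d*a))*c + (b*c)*(d*a))) +
      (2:ℤ) • (a*((d*c)*b) + a*(b*(d*c)) - ((a*(d*c))*b + (a*b)*(d*c))) +
      (6:ℤ) • ((a*(b*c) + a*(c*b) - ((a*b)*c + (a*c)*b)) * d) +
      (-6:ℤ) • ((a*(b*d) + a*(d*b) - ((a*b)*d + (a*d)*b)) * c) +
      (-12:ℤ) • (d * (b*(a*c) + b*(c*a) - ((b*a)*c + (b*c)*a))) +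
      (-2:ℤ) • ((a*b)*(c*d) - c*((a*b)*d)) +
      (-8:ℤ) • ((a*b)*(d*c) - d*((a*b)*c)) +
      (-6:ℤ) • ((a*c)*(b*d) - b*((a*c)*d)) +
      (-4:ℤ) • ((a*d)*(b*c) - b*((a*d)*c)) +
      (-4:ℤ) • ((b*a)*(d*c) - d*((b*a)*c)) +
      (-2:ℤ) • ((b*c)*(a*d) - a*((b*c)*d)) +
      (4:ℤ) • ((b*c)*(d*a) - d*((b*c)*a)) +
      (-8:ℤ) • ((b*d)*(a*c) - a*((b*d)*c)) +
      (-2:ℤ) • ((c*a)*(b*d) - b*((c*a)*d)) +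
      (4:ℤ) • ((c*d)*(b*a) - b*((c*d)*a)) +
      (-4:ℤ) • ((d*a)*(b*c) - b*((d*a)*c)) +
      (4:ℤ) • ((d*b)*(c*a) - c*((d*b)*a)) +
      (4:ℤ) • (b*(d*(a*c)) - d*(b*(a*c))) +
      (4:ℤ) • (a*(d*(b*c)) - d*(a*(b*c))) := by
    simp only [mul_add, add_mul, mul_sub, sub_mul]
    abel
  simp only [h0, h1, h2, h3, h4, h5, h6, h7, h8, h9, h10, h11, h12, h13, h14, h15, h16, h17, h18, h19, h20, h21, h22, h23, h24, h25, h26, h27, h28, h29, h30, h31, h32, h33, h34, h35, h36, h37, h38, h39, h40, h41, h42, h43, h44, h45, h46, h47, h48, h49, h50, h51, h52, h53, h54, h55, h56, h57, h58, h59, h60, h61, h62, h63, h64, h65, h66, h67, h68, h69, h70, h71, h72, h73, h74, h75, h76, h77, h78, h79, h80, h81, h82, h83, h84, h85, smul_zero, add_zero, zero_add] at key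
  have key2 : ((6:ℤ):K) • (((b*a)*c)*d - ((a*c)*b)*d) = 0 := by
    rw [Int.cast_smul_eq_zsmul]; exact key
  have h6 : ((6:ℤ):K) ≠ 0 := by norm_num
  calc ((b*a)*c)*d - ((a*c)*b)*d
      = (((6:ℤ):K)⁻¹ * ((6:ℤ):K)) • (((b*a)*c)*d - ((a*c)*b)*d) := by
        rw [inv_mul_cancel₀ h6, one_smul]
    _ = 0 := by rw [mul_smul, key2, smul_zero]
end

section
/- Every alternative algebra satisfying the left-commutative identity a(bc) = b(ac) satisfies a(bc) = (1/2)((ba)c + (ab)c) for all a, b, c. -/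
theorem stmt7 {K A : Type*} [Field K] [CharZero K] [NonUnitalNonAssocRing A]
    [Module K A] [SMulCommClass K A A] [IsScalarTower K A A]
    (hL : ∀ a b : A, (a*a)*b = a*(a*b)) (hR : ∀ a b : A, (a*b)*b = a*(b*b)) (hLC : ∀ a b c : A, a*(b*c) = b*(a*c)) :
    ∀ a b c : A, a*(b*c) = (1/2:K) • ((b*a)*c + (a*b)*c) := by
  intro a b c
  have h := hL (a+b) c
  simp only [mul_add, add_mul, hL a c, hL b c] at h
  have lin : (a*b)*c + (b*a)*c = a*(b*c) + b*(a*c) := by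
    linear_combination (norm := abel) h
  rw [hLC b a c] at lin
  have key : (b*a)*c + (a*b)*c = (2:K) • (a*(b*c)) := by
    rw [two_smul]
    linear_combination (norm := abel) lin
  rw [key, smul_smul]
  norm_num
end

section
/- Every alternative algebra satisfying the left-commutative identity a(bc) = b(ac) satisfies (((ab)c)d)e = (((ac)b)d)e and (((ab)c)d)e = (((ab)d)c)e for all a, b, c, d, e. -/
set_option maxRecDepth 100000
set_option maxHeartbeats 1600000
set_option linter.unusedSectionVars false

theorem zsmul_cancel (K : Type*) [Field K] [CharZero K] {A : Type*} [AddCommGroup A] [Module K A]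
    (n : ℤ) (hn : n ≠ 0) {x y : A} (h : n • x = n • y) : x = y := by
  have h2 : ((n : K)) • x = ((n : K)) • y := by
    rw [Int.cast_smul_eq_zsmul, Int.cast_smul_eq_zsmul]; exact h
  have hn' : ((n : K)) ≠ 0 := by exact_mod_cast hn
  have := congrArg (fun t => ((n:K))⁻¹ • t) h2
  simpa [smul_smul, inv_mul_cancel₀ hn'] using this

section Helpers1
variable {A : Type*} [NonUnitalNonAssocRing A]
variable (hL : ∀ a b : A, (a*a)*b = a*(a*b)) (hR : ∀ a b : A, (a*b)*b = a*(b*b)) (hLC : ∀ a b c : A, a*(b*c) = b*(a*c))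

include hL in
theorem lemA (x y z : A) : (x*y)*z + (y*x)*z = x*(y*z) + y*(x*z) := by
  linear_combination (norm := ((try simp only [mul_add, add_mul, mul_sub, sub_mul]); abel)) hL (x+y) z - hL x z - hL y z

include hR in
theorem lemB (x y z : A) : (x*y)*z + (x*z)*y = x*(y*z) + x*(z*y) := by
  linear_combination (norm := ((try simp only [mul_add, add_mul, mul_sub, sub_mul]); abel)) hR x (y+z) - hR x y - hR x z

include hL hR hLC in
theorem lemC (a b c : A) : (a*b)*c - (a*c)*b = (b*c-c*b)*a + a*(b*c-c*b) := by
  have lemA := lemA hL; have lemB := lemB hR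
  linear_combination (norm := ((try simp only [mul_add, add_mul, mul_sub, sub_mul]); abel)) (1:ℤ) • (lemA a b c) +
      (-1:ℤ) • (lemA a c b) +
      (-1:ℤ) • (lemB b c a) +
      (-1:ℤ) • (hLC b c a) +
      (1:ℤ) • (lemB c b a)
end Helpers1

section Helpers2
variable {K A : Type*} [Field K] [CharZero K] [NonUnitalNonAssocRing A]
    [Module K A] [SMulCommClass K A A] [IsScalarTower K A A]
variable (hL : ∀ a b : A, (a*a)*b = a*(a*b)) (hR : ∀ a b : A, (a*b)*b = a*(b*b)) (hLC : ∀ a b c : A, a*(b*c) = b*(a*c))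

include K hL hR hLC in
theorem lemN (c a b d : A) : (c*(a*b))*d = (c*(b*a))*d := by
  have lemA := lemA hL; have lemB := lemB hR
  refine zsmul_cancel K 2 (by norm_num) ?_
  linear_combination (norm := ((try simp only [mul_add, add_mul, mul_sub, sub_mul]); abel)) (-2:ℤ) • (lemA a b (c*d)) +
      (-2:ℤ) • (hLC a b (c*d)) +
      (-2:ℤ) • (lemA a c (b*d)) +
      (-2:ℤ) • (lemB b c (d*a)) +
      (-1:ℤ) • (hLC b d (c*a)) +
      (2:ℤ) • (lemB b (a*c) d) +
      (-2:ℤ) • (hLC b (a*c) d) +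
      (-2:ℤ) • (lemB b (c*a) d) +
      (2:ℤ) • (lemA b (d*c) a) +
      (2:ℤ) • (hLC c a (b*d)) +
      (2:ℤ) • (lemA c d (b*a)) +
      (-2:ℤ) • (lemA c (a*b) d) +
      (2:ℤ) • (lemB c (a*b) d) +
      (-2:ℤ) • (lemB c (b*a) d) +
      (2:ℤ) • (lemB c (d*a) b) +
      (4:ℤ) • (lemB c (b*d) a) +
      (1:ℤ) • (hLC c (b*d) a) +
      (1:ℤ) • (hLC c (d*b) a) +
      (1:ℤ) • (lemA d b (c*a)) +
      (-2:ℤ) • (lemA d c (a*b)) +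
      (-2:ℤ) • (lemB d (b*a) c) +
      (2:ℤ) • (lemB d (a*c) b) +
      (2:ℤ) • (lemB d (c*a) b) +
      (-2:ℤ) • (lemB d (c*b) a) +
      (2:ℤ) • (hLC (b*a) c d) +
      (2:ℤ) • (lemA (c*a) b d) +
      (-2:ℤ) • (lemA (d*a) c b) +
      (-2:ℤ) • (lemA (b*c) d a) +
      (2:ℤ) • (lemA (c*b) d a) +
      (2:ℤ) • (lemB (d*b) a c) +
      (-4:ℤ) • (lemA (b*d) c a) +
      (2:ℤ) • (lemB (b*d) c a) +
      (-2:ℤ) • (lemB (d*c) b a) +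
      (2:ℤ) • ((hLC a b c) * d) +
      (-2:ℤ) • ((lemA a c b) * d) +
      (2:ℤ) • (d * (lemA a c b)) +
      (2:ℤ) • ((lemB a c b) * d) +
      (-2:ℤ) • (d * (lemB b a c)) +
      (1:ℤ) • (c * (hLC b d a)) +
      (-2:ℤ) • ((lemA d b a) * c) +
      (-1:ℤ) • (c * (lemA d b a)) +
      (4:ℤ) • (b * (lemA c a d)) +
      (-4:ℤ) • (b * (lemB c a d)) +
      (4:ℤ) • (b * (lemA d c a)) +
      (2:ℤ) • ((lemB d c a) * b) +
      (-2:ℤ) • (b * (lemB d c a)) +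
      (2:ℤ) • (b * (hLC d c a)) +
      (-2:ℤ) • ((lemA b c d) * a) +
      (-2:ℤ) • ((lemA b d c) * a) +
      (4:ℤ) • ((lemB b d c) * a) +
      (-2:ℤ) • ((hLC c b d) * a)

include K hL hR hLC in
theorem goal1 (a b c d e : A) : (((a*b)*c)*d)*e = (((a*c)*b)*d)*e := by
  have lemA := lemA hL; have lemB := lemB hR
  have lemC := lemC hL hR hLC
  have lemN := lemN (K:=K) hL hR hLC
  refine zsmul_cancel K 1 (by norm_num) ?_
  linear_combination (norm := ((try simp only [mul_add, add_mul, mul_sub, sub_mul]); abel)) (4:ℤ) • (lemB a b (c*(d*e))) +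
      (4:ℤ) • (hLC a b (c*(d*e))) +
      (-2:ℤ) • (lemB a b (d*(e*c))) +
      (-2:ℤ) • (hLC a b (d*(e*c))) +
      (1:ℤ) • (lemB a b ((d*e)*c)) +
      (1:ℤ) • (hLC a b ((d*e)*c)) +
      (1:ℤ) • (lemB a b ((e*d)*c)) +
      (1:ℤ) • (hLC a b ((e*d)*c)) +
      (-4:ℤ) • (lemB a c (b*(d*e))) +
      (-4:ℤ) • (hLC a c (b*(d*e))) +
      (2:ℤ) • (lemB a c (d*(e*b))) +
      (2:ℤ) • (hLC a c (d*(e*b))) +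
      (-1:ℤ) • (lemB a c ((d*e)*b)) +
      (-1:ℤ) • (hLC a c ((d*e)*b)) +
      (-1:ℤ) • (lemB a c ((e*d)*b)) +
      (-1:ℤ) • (hLC a c ((e*d)*b)) +
      (1:ℤ) • (lemB a (b*c) (d*e)) +
      (1:ℤ) • (hLC a (b*c) (d*e)) +
      (1:ℤ) • (lemB a (b*c) (e*d)) +
      (1:ℤ) • (hLC a (b*c) (e*d)) +
      (-1:ℤ) • (lemB a (c*b) (d*e)) +
      (-1:ℤ) • (hLC a (c*b) (d*e)) +
      (-1:ℤ) • (lemB a (c*b) (e*d)) +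
      (-1:ℤ) • (hLC a (c*b) (e*d)) +
      (1:ℤ) • (lemB a (b*d) (c*e)) +
      (1:ℤ) • (hLC a (b*d) (c*e)) +
      (1:ℤ) • (lemB a (b*d) (e*c)) +
      (1:ℤ) • (hLC a (b*d) (e*c)) +
      (-1:ℤ) • (lemB a (d*b) (c*e)) +
      (-1:ℤ) • (hLC a (d*b) (c*e)) +
      (-1:ℤ) • (lemB a (d*b) (e*c)) +
      (-1:ℤ) • (hLC a (d*b) (e*c)) +
      (-2:ℤ) • (lemB a (b*e) (c*d)) +
      (-2:ℤ) • (hLC a (b*e) (c*d)) +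
      (2:ℤ) • (lemB a (b*e) (d*c)) +
      (2:ℤ) • (hLC a (b*e) (d*c)) +
      (-2:ℤ) • (hLC a (c*d) (b*e)) +
      (2:ℤ) • (hLC a (d*c) (b*e)) +
      (1:ℤ) • (hLC a (c*e) (b*d)) +
      (-1:ℤ) • (hLC a (c*e) (d*b)) +
      (1:ℤ) • (hLC a (e*c) (b*d)) +
      (-1:ℤ) • (hLC a (e*c) (d*b)) +
      (1:ℤ) • (hLC a (d*e) (b*c)) +
      (-1:ℤ) • (hLC a (d*e) (c*b)) +
      (1:ℤ) • (hLC a (e*d) (b*c)) +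
      (-1:ℤ) • (hLC a (e*d) (c*b)) +
      (2:ℤ) • (lemA a (b*(c*d)) e) +
      (2:ℤ) • (hLC a (b*(c*d)) e) +
      (-1:ℤ) • (lemA a (b*(d*c)) e) +
      (-1:ℤ) • (hLC a (b*(d*c)) e) +
      (-1:ℤ) • (lemA a (c*(d*b)) e) +
      (-1:ℤ) • (hLC a (c*(d*b)) e) +
      (2:ℤ) • (lemA a (b*(c*e)) d) +
      (2:ℤ) • (hLC a (b*(c*e)) d) +
      (-2:ℤ) • (lemA a (b*(e*c)) d) +
      (-2:ℤ) • (hLC a (b*(e*c)) d) +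
      (3:ℤ) • (lemA a (b*(d*e)) c) +
      (-1:ℤ) • (hLC a (b*(d*e)) c) +
      (-1:ℤ) • (lemA a (b*(e*d)) c) +
      (-1:ℤ) • (hLC a (b*(e*d)) c) +
      (-2:ℤ) • (lemA a (d*(e*b)) c) +
      (-1:ℤ) • (hLC a ((d*e)*b) c) +
      (-1:ℤ) • (hLC a ((e*d)*b) c) +
      (-1:ℤ) • (lemA a (c*(d*e)) b) +
      (3:ℤ) • (hLC a (c*(d*e)) b) +
      (-1:ℤ) • (lemA a (c*(e*d)) b) +
      (-1:ℤ) • (hLC a (c*(e*d)) b) +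
      (2:ℤ) • (lemA a (d*(e*c)) b) +
      (1:ℤ) • (hLC a ((d*e)*c) b) +
      (1:ℤ) • (hLC a ((e*d)*c) b) +
      (1:ℤ) • (lemA b c (a*(d*e))) +
      (5:ℤ) • (hLC b c (a*(d*e))) +
      (-1:ℤ) • (lemA b c (a*(e*d))) +
      (2:ℤ) • (lemB b c (a*(e*d))) +
      (1:ℤ) • (hLC b c (a*(e*d))) +
      (1:ℤ) • (lemA b d (a*(c*e))) +
      (1:ℤ) • (hLC b d (a*(c*e))) +
      (-1:ℤ) • (lemA b d (a*(e*c))) +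
      (2:ℤ) • (lemB b d (a*(e*c))) +
      (-1:ℤ) • (hLC b d (a*(e*c))) +
      (-2:ℤ) • (lemB b e (a*(c*d))) +
      (-2:ℤ) • (hLC b e (a*(c*d))) +
      (2:ℤ) • (lemB b e (a*(d*c))) +
      (2:ℤ) • (hLC b e (a*(d*c))) +
      (-2:ℤ) • (lemA b (a*c) (d*e)) +
      (-2:ℤ) • (hLC b (a*c) (d*e)) +
      (-1:ℤ) • (lemA b (d*e) (a*c)) +
      (-1:ℤ) • (lemA b (e*d) (a*c)) +
      (-2:ℤ) • (hLC b (a*(c*d)) e) +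
      (2:ℤ) • (hLC b (a*(d*c)) e) +
      (2:ℤ) • (hLC b (a*(e*c)) d) +
      (2:ℤ) • (hLC b (a*(e*d)) c) +
      (-2:ℤ) • (lemB c b (a*(d*e))) +
      (-2:ℤ) • (lemB c d (a*(b*e))) +
      (-2:ℤ) • (hLC c d (a*(b*e))) +
      (2:ℤ) • (hLC c d (a*(e*b))) +
      (1:ℤ) • (lemA c e (a*(b*d))) +
      (1:ℤ) • (hLC c e (a*(b*d))) +
      (-1:ℤ) • (lemA c e (a*(d*b))) +
      (-1:ℤ) • (hLC c e (a*(d*b))) +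
      (2:ℤ) • (lemA c (a*b) (d*e)) +
      (2:ℤ) • (hLC c (a*b) (d*e)) +
      (1:ℤ) • (lemA c (d*e) (a*b)) +
      (1:ℤ) • (lemA c (e*d) (a*b)) +
      (-2:ℤ) • (hLC c (a*(b*e)) d) +
      (-2:ℤ) • (hLC c (a*(d*e)) b) +
      (-2:ℤ) • (lemB d b (a*(c*e))) +
      (2:ℤ) • (lemB d c (a*(b*e))) +
      (-2:ℤ) • (hLC d e (b*(a*c))) +
      (2:ℤ) • (hLC d e (c*(a*b))) +
      (-1:ℤ) • (lemA d e ((a*b)*c)) +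
      (-1:ℤ) • (hLC d e ((a*b)*c)) +
      (1:ℤ) • (lemA d e ((a*c)*b)) +
      (1:ℤ) • (hLC d e ((a*c)*b)) +
      (1:ℤ) • (lemA d ((a*b)*c) e) +
      (1:ℤ) • (hLC d ((a*b)*c) e) +
      (-1:ℤ) • (lemA d ((a*c)*b) e) +
      (-1:ℤ) • (hLC d ((a*c)*b) e) +
      (2:ℤ) • (hLC d (a*(b*e)) c) +
      (-2:ℤ) • (hLC d (a*(c*e)) b) +
      (-2:ℤ) • (hLC e (a*b) (d*c)) +
      (2:ℤ) • (hLC e (a*c) (d*b)) +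
      (-1:ℤ) • (hLC (a*b) (d*e) c) +
      (-1:ℤ) • (hLC (a*b) (e*d) c) +
      (1:ℤ) • (hLC (a*c) (d*e) b) +
      (1:ℤ) • (hLC (a*c) (e*d) b) +
      (1:ℤ) • (lemN a b c (d*e)) +
      (-1:ℤ) • (lemN a b c (e*d)) +
      (-1:ℤ) • (lemN a b d (c*e)) +
      (-1:ℤ) • (lemN a b d (e*c)) +
      (-1:ℤ) • (lemN a b (d*e) c) +
      (-1:ℤ) • (lemN a b (e*d) c) +
      (-1:ℤ) • (lemN a c e (b*d)) +
      (-1:ℤ) • (lemN a c e (d*b)) +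
      (1:ℤ) • (lemN a c (d*e) b) +
      (1:ℤ) • (lemN a c (e*d) b) +
      (-1:ℤ) • (lemN a d e (b*c)) +
      (-1:ℤ) • (lemN a d e (c*b)) +
      (2:ℤ) • (lemN b c d (a*e)) +
      (4:ℤ) • (lemN b c e (a*d)) +
      (1:ℤ) • (lemN b d e (a*c)) +
      (2:ℤ) • (lemN c b d (a*e)) +
      (3:ℤ) • (lemN c d e (a*b)) +
      (2:ℤ) • (lemN d b e (a*c)) +
      (-1:ℤ) • (lemN d b (a*c) e) +
      (-2:ℤ) • (lemN d c e (a*b)) +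
      (1:ℤ) • (lemN d c (a*b) e) +
      (-2:ℤ) • ((hLC a b c) * (d*e)) +
      (1:ℤ) • ((d*e) * (hLC a b c)) +
      (2:ℤ) • ((hLC a c b) * (d*e)) +
      (-1:ℤ) • ((d*e) * (hLC a c b)) +
      (1:ℤ) • ((e*d) * (hLC a b c)) +
      (-1:ℤ) • ((e*d) * (hLC a c b)) +
      (2:ℤ) • ((hLC b c d) * (a*e)) +
      (2:ℤ) • ((hLC b d e) * (a*c)) +
      (-2:ℤ) • ((a*c) * (hLC d e b)) +
      (-2:ℤ) • ((hLC c d e) * (a*b)) +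
      (2:ℤ) • ((a*b) * (hLC d e c)) +
      (-2:ℤ) • ((hLC a b (c*d)) * e) +
      (1:ℤ) • ((hLC a b (d*c)) * e) +
      (1:ℤ) • ((hLC a c (d*b)) * e) +
      (-2:ℤ) • (e * (hLC b c (a*d))) +
      (-1:ℤ) • ((hLC b d (a*c)) * e) +
      (2:ℤ) • (e * (hLC b d (a*c))) +
      (1:ℤ) • ((hLC c d (a*b)) * e) +
      (-2:ℤ) • (e * (hLC c d (a*b))) +
      (-2:ℤ) • (e * (hLC d (a*b) c)) +
      (2:ℤ) • (e * (hLC d (a*c) b)) +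
      (-1:ℤ) • ((lemN b c d a) * e) +
      (-1:ℤ) • ((lemN c b d a) * e) +
      (2:ℤ) • (e * (c * (hLC a b d))) +
      (1:ℤ) • ((c * (hLC a d b)) * e) +
      (-2:ℤ) • (e * (c * (hLC a d b))) +
      (-2:ℤ) • (e * (b * (hLC a c d))) +
      (-1:ℤ) • ((b * (hLC a d c)) * e) +
      (2:ℤ) • (e * (b * (hLC a d c))) +
      (-1:ℤ) • (((hLC b c d) * a) * e) +
      (-2:ℤ) • ((hLC a b (c*e)) * d) +
      (2:ℤ) • ((hLC a b (e*c)) * d) +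
      (-2:ℤ) • ((hLC b c (a*e)) * d) +
      (-2:ℤ) • (d * (hLC b e (a*c))) +
      (2:ℤ) • (d * (hLC c e (a*b))) +
      (-2:ℤ) • ((lemN b c e a) * d) +
      (2:ℤ) • ((c * (hLC a b e)) * d) +
      (2:ℤ) • (d * (c * (hLC a e b))) +
      (-2:ℤ) • ((b * (hLC a c e)) * d) +
      (-2:ℤ) • (d * (b * (hLC a e c))) +
      (2:ℤ) • ((hLC a b (d*e)) * c) +
      (-4:ℤ) • (c * (hLC a b (d*e))) +
      (2:ℤ) • ((hLC a b (e*d)) * c) +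
      (2:ℤ) • (c * (hLC a d (e*b))) +
      (-1:ℤ) • (c * (hLC a (d*e) b)) +
      (-1:ℤ) • (c * (hLC a (e*d) b)) +
      (2:ℤ) • ((hLC b d (a*e)) * c) +
      (-1:ℤ) • ((lemN b d e a) * c) +
      (-2:ℤ) • ((lemN d b e a) * c) +
      (-2:ℤ) • ((d * (hLC a b e)) * c) +
      (2:ℤ) • ((b * (hLC a d e)) * c) +
      (-2:ℤ) • (((hLC b d e) * a) * c) +
      (-4:ℤ) • ((hLC a c (d*e)) * b) +
      (4:ℤ) • (b * (hLC a c (d*e))) +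
      (-2:ℤ) • (b * (hLC a d (e*c))) +
      (1:ℤ) • (b * (hLC a (d*e) c)) +
      (1:ℤ) • (b * (hLC a (e*d) c)) +
      (-2:ℤ) • ((hLC c d (a*e)) * b) +
      (-1:ℤ) • ((lemN c d e a) * b) +
      (2:ℤ) • ((lemN d c e a) * b) +
      (2:ℤ) • ((d * (hLC a c e)) * b) +
      (-2:ℤ) • ((c * (hLC a d e)) * b) +
      (2:ℤ) • (((hLC c d e) * a) * b)

include K hL hR hLC in
theorem goal2 (a b c d e : A) : (((a*b)*c)*d)*e = (((a*b)*d)*c)*e := by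
  have lemA := lemA hL; have lemB := lemB hR
  have lemC := lemC hL hR hLC
  have lemN := lemN (K:=K) hL hR hLC
  refine zsmul_cancel K 4 (by norm_num) ?_
  linear_combination (norm := ((try simp only [mul_add, add_mul, mul_sub, sub_mul]); abel)) (-2:ℤ) • (lemA a c (b*(d*e))) +
      (2:ℤ) • (lemB a c (b*(d*e))) +
      (-2:ℤ) • (lemA a c ((d*e)*b)) +
      (2:ℤ) • (lemB a c ((d*e)*b)) +
      (4:ℤ) • (lemB a d (b*(c*e))) +
      (4:ℤ) • (hLC a d (b*(c*e))) +
      (-2:ℤ) • (lemB a d (c*(e*b))) +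
      (-2:ℤ) • (hLC a d (c*(e*b))) +
      (2:ℤ) • (lemB a d ((e*c)*b)) +
      (2:ℤ) • (hLC a d ((e*c)*b)) +
      (-4:ℤ) • (lemA a e (b*(c*d))) +
      (4:ℤ) • (lemB a e (b*(c*d))) +
      (-2:ℤ) • (lemA a e (c*(d*b))) +
      (-2:ℤ) • (lemB a e (c*(d*b))) +
      (-4:ℤ) • (hLC a e (c*(d*b))) +
      (2:ℤ) • (lemA a e ((c*d)*b)) +
      (2:ℤ) • (hLC a e ((c*d)*b)) +
      (2:ℤ) • (lemB a e ((d*c)*b)) +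
      (2:ℤ) • (hLC a e ((d*c)*b)) +
      (-4:ℤ) • (lemB a (b*c) (d*e)) +
      (-4:ℤ) • (hLC a (b*c) (d*e)) +
      (5:ℤ) • (lemB a (b*d) (c*e)) +
      (5:ℤ) • (hLC a (b*d) (c*e)) +
      (1:ℤ) • (lemB a (b*d) (e*c)) +
      (1:ℤ) • (hLC a (b*d) (e*c)) +
      (1:ℤ) • (lemB a (d*b) (c*e)) +
      (1:ℤ) • (hLC a (d*b) (c*e)) +
      (-1:ℤ) • (lemB a (d*b) (e*c)) +
      (-1:ℤ) • (hLC a (d*b) (e*c)) +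
      (-5:ℤ) • (lemB a (b*e) (c*d)) +
      (-5:ℤ) • (hLC a (b*e) (c*d)) +
      (-1:ℤ) • (lemB a (b*e) (d*c)) +
      (-1:ℤ) • (hLC a (b*e) (d*c)) +
      (-1:ℤ) • (lemB a (e*b) (c*d)) +
      (-1:ℤ) • (hLC a (e*b) (c*d)) +
      (1:ℤ) • (lemB a (e*b) (d*c)) +
      (1:ℤ) • (hLC a (e*b) (d*c)) +
      (-5:ℤ) • (hLC a (c*d) (b*e)) +
      (-1:ℤ) • (hLC a (c*d) (e*b)) +
      (-1:ℤ) • (hLC a (d*c) (b*e)) +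
      (1:ℤ) • (hLC a (d*c) (e*b)) +
      (5:ℤ) • (hLC a (c*e) (b*d)) +
      (1:ℤ) • (hLC a (c*e) (d*b)) +
      (1:ℤ) • (hLC a (e*c) (b*d)) +
      (-1:ℤ) • (hLC a (e*c) (d*b)) +
      (-4:ℤ) • (hLC a (d*e) (b*c)) +
      (-2:ℤ) • (lemA a (b*(c*d)) e) +
      (2:ℤ) • (hLC a (b*(c*d)) e) +
      (2:ℤ) • (lemA a (c*(d*b)) e) +
      (2:ℤ) • (hLC a ((d*c)*b) e) +
      (2:ℤ) • (lemA a (b*(c*e)) d) +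
      (6:ℤ) • (hLC a (b*(c*e)) d) +
      (-4:ℤ) • (lemA a (b*(e*c)) d) +
      (-4:ℤ) • (hLC a (b*(e*c)) d) +
      (2:ℤ) • (lemA a (c*(e*b)) d) +
      (2:ℤ) • (hLC a ((e*c)*b) d) +
      (2:ℤ) • (hLC a (b*(d*e)) c) +
      (2:ℤ) • (hLC a ((d*e)*b) c) +
      (-4:ℤ) • (lemB b c (a*(d*e))) +
      (-4:ℤ) • (hLC b c (a*(d*e))) +
      (1:ℤ) • (lemA b d (a*(c*e))) +
      (4:ℤ) • (lemB b d (a*(c*e))) +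
      (5:ℤ) • (hLC b d (a*(c*e))) +
      (-1:ℤ) • (lemA b d (a*(e*c))) +
      (2:ℤ) • (lemB b d (a*(e*c))) +
      (1:ℤ) • (hLC b d (a*(e*c))) +
      (-1:ℤ) • (lemA b e (a*(c*d))) +
      (-4:ℤ) • (lemB b e (a*(c*d))) +
      (-5:ℤ) • (hLC b e (a*(c*d))) +
      (1:ℤ) • (lemA b e (a*(d*c))) +
      (-2:ℤ) • (lemB b e (a*(d*c))) +
      (-1:ℤ) • (hLC b e (a*(d*c))) +
      (-4:ℤ) • (lemB b (c*a) (d*e)) +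
      (-4:ℤ) • (hLC b (c*a) (d*e)) +
      (2:ℤ) • (lemA b (a*d) (c*e)) +
      (2:ℤ) • (hLC b (a*d) (c*e)) +
      (-2:ℤ) • (lemA b (e*a) (c*d)) +
      (-2:ℤ) • (hLC b (e*a) (c*d)) +
      (2:ℤ) • (lemA b (d*c) (a*e)) +
      (2:ℤ) • (hLC b (d*c) (a*e)) +
      (2:ℤ) • (lemA b (e*c) (a*d)) +
      (2:ℤ) • (hLC b (e*c) (a*d)) +
      (2:ℤ) • (lemA b (d*e) (a*c)) +
      (2:ℤ) • (hLC b (d*e) (a*c)) +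
      (2:ℤ) • (lemA b (d*e) (c*a)) +
      (-2:ℤ) • (hLC b (d*e) (c*a)) +
      (-4:ℤ) • (hLC b (a*(c*d)) e) +
      (-2:ℤ) • (hLC b (a*(d*c)) e) +
      (-2:ℤ) • (lemA b (a*(c*e)) d) +
      (2:ℤ) • (hLC b (a*(c*e)) d) +
      (2:ℤ) • (hLC b (a*(e*c)) d) +
      (2:ℤ) • (lemA b (c*(e*a)) d) +
      (2:ℤ) • (hLC b (c*(e*a)) d) +
      (-4:ℤ) • (hLC b (a*(d*e)) c) +
      (-2:ℤ) • (lemB c a (b*(d*e))) +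
      (2:ℤ) • (lemB c a ((d*e)*b)) +
      (3:ℤ) • (lemA c d (a*(b*e))) +
      (-8:ℤ) • (lemB c d (a*(b*e))) +
      (-5:ℤ) • (hLC c d (a*(b*e))) +
      (3:ℤ) • (lemA c d (a*(e*b))) +
      (3:ℤ) • (hLC c d (a*(e*b))) +
      (-8:ℤ) • (hLC c d (b*(a*e))) +
      (-2:ℤ) • (lemA c d ((a*e)*b)) +
      (-2:ℤ) • (hLC c d ((a*e)*b)) +
      (-2:ℤ) • (lemB c d ((e*a)*b)) +
      (-2:ℤ) • (hLC c d ((e*a)*b)) +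
      (5:ℤ) • (lemA c e (a*(b*d))) +
      (5:ℤ) • (hLC c e (a*(b*d))) +
      (1:ℤ) • (lemA c e (a*(d*b))) +
      (1:ℤ) • (hLC c e (a*(d*b))) +
      (-2:ℤ) • (lemA c e ((a*d)*b)) +
      (2:ℤ) • (lemB c e ((a*d)*b)) +
      (8:ℤ) • (lemA c (a*b) (d*e)) +
      (8:ℤ) • (hLC c (a*b) (d*e)) +
      (-4:ℤ) • (lemA c ((a*b)*d) e) +
      (-4:ℤ) • (hLC c ((a*b)*d) e) +
      (2:ℤ) • (hLC c ((a*d)*b) e) +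
      (-8:ℤ) • (hLC c (a*(b*e)) d) +
      (-2:ℤ) • (hLC c ((e*a)*b) d) +
      (-2:ℤ) • (hLC c (b*(d*e)) a) +
      (2:ℤ) • (hLC c ((d*e)*b) a) +
      (4:ℤ) • (hLC d e (c*(a*b))) +
      (-8:ℤ) • (lemA d (a*b) (c*e)) +
      (-8:ℤ) • (hLC d (a*b) (c*e)) +
      (-4:ℤ) • (hLC d (a*e) (c*b)) +
      (-2:ℤ) • (hLC d (e*a) (c*b)) +
      (2:ℤ) • (hLC d (e*c) (a*b)) +
      (4:ℤ) • (lemA d ((a*b)*c) e) +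
      (4:ℤ) • (hLC d ((a*b)*c) e) +
      (-2:ℤ) • (hLC e (a*d) (c*b)) +
      (4:ℤ) • (hLC e (c*d) (a*b)) +
      (2:ℤ) • (hLC e (d*c) (a*b)) +
      (-2:ℤ) • (hLC (a*d) (e*c) b) +
      (-2:ℤ) • (hLC (a*e) (c*d) b) +
      (-2:ℤ) • (hLC (a*e) (d*c) b) +
      (-2:ℤ) • (hLC (e*a) (c*d) b) +
      (8:ℤ) • (lemN a b c (d*e)) +
      (-7:ℤ) • (lemN a b d (c*e)) +
      (-1:ℤ) • (lemN a b d (e*c)) +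
      (-1:ℤ) • (lemN a b e (c*d)) +
      (1:ℤ) • (lemN a b e (d*c)) +
      (2:ℤ) • (lemN a b (d*c) e) +
      (2:ℤ) • (lemN a b (e*c) d) +
      (2:ℤ) • (lemN a b (d*e) c) +
      (1:ℤ) • (lemN a c d (b*e)) +
      (1:ℤ) • (lemN a c d (e*b)) +
      (-1:ℤ) • (lemN a c e (b*d)) +
      (-1:ℤ) • (lemN a c e (d*b)) +
      (-4:ℤ) • (lemN b a c (d*e)) +
      (-2:ℤ) • (lemN b a e (c*d)) +
      (2:ℤ) • (lemN b c d (a*e)) +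
      (10:ℤ) • (lemN b c e (a*d)) +
      (-4:ℤ) • (lemN c a e (b*d)) +
      (-2:ℤ) • (lemN c b d (a*e)) +
      (-2:ℤ) • (lemN c b e (a*d)) +
      (2:ℤ) • (lemN c b (a*d) e) +
      (-2:ℤ) • (lemN c b (e*a) d) +
      (2:ℤ) • (lemN c b (d*e) a) +
      (-4:ℤ) • (lemN c d (a*b) e) +
      (4:ℤ) • (lemN d c (a*b) e) +
      (-4:ℤ) • ((hLC a b c) * (d*e)) +
      (-4:ℤ) • ((d*e) * (hLC a b c)) +
      (8:ℤ) • ((hLC a c b) * (d*e)) +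
      (2:ℤ) • ((hLC a b d) * (c*e)) +
      (-8:ℤ) • ((hLC a d b) * (c*e)) +
      (-4:ℤ) • ((e*c) * (hLC a b d)) +
      (-2:ℤ) • ((e*c) * (hLC a d b)) +
      (-2:ℤ) • ((hLC a b e) * (c*d)) +
      (-4:ℤ) • ((c*d) * (hLC a e b)) +
      (-4:ℤ) • ((d*c) * (hLC a b e)) +
      (-2:ℤ) • ((d*c) * (hLC a e b)) +
      (-4:ℤ) • ((hLC a c e) * (b*d)) +
      (-2:ℤ) • ((hLC b c d) * (a*e)) +
      (4:ℤ) • ((a*e) * (hLC c d b)) +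
      (2:ℤ) • ((e*a) * (hLC c d b)) +
      (-2:ℤ) • ((hLC b c e) * (a*d)) +
      (2:ℤ) • ((a*d) * (hLC c e b)) +
      (16:ℤ) • ((a*b) * (hLC c d e)) +
      (-2:ℤ) • ((hLC a b (c*d)) * e) +
      (-4:ℤ) • (e * (hLC a b (c*d))) +
      (-2:ℤ) • ((hLC a b (d*c)) * e) +
      (-6:ℤ) • (e * (hLC a c (d*b))) +
      (4:ℤ) • (e * (hLC a (c*d) b)) +
      (2:ℤ) • (e * (hLC a (d*c) b)) +
      (2:ℤ) • ((hLC b c (a*d)) * e) +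
      (-10:ℤ) • (e * (hLC b c (a*d))) +
      (4:ℤ) • ((hLC c d (a*b)) * e) +
      (-4:ℤ) • (e * (hLC c d (a*b))) +
      (-2:ℤ) • (e * (hLC c (a*d) b)) +
      (2:ℤ) • ((lemN c b d a) * e) +
      (10:ℤ) • (e * (c * (hLC a b d))) +
      (-4:ℤ) • (e * (c * (hLC a d b))) +
      (2:ℤ) • ((b * (hLC a c d)) * e) +
      (-10:ℤ) • (e * (b * (hLC a c d))) +
      (2:ℤ) • (((hLC b c d) * a) * e) +
      (-6:ℤ) • ((hLC a b (c*e)) * d) +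
      (4:ℤ) • (d * (hLC a b (c*e))) +
      (2:ℤ) • ((hLC a b (e*c)) * d) +
      (-2:ℤ) • (d * (hLC a c (e*b))) +
      (2:ℤ) • (d * (hLC a (e*c) b)) +
      (-8:ℤ) • ((hLC b c (a*e)) * d) +
      (10:ℤ) • (d * (hLC b c (a*e))) +
      (-2:ℤ) • ((hLC b c (e*a)) * d) +
      (4:ℤ) • (d * (hLC c e (a*b))) +
      (-4:ℤ) • (d * (hLC c (a*e) b)) +
      (-2:ℤ) • (d * (hLC c (e*a) b)) +
      (-4:ℤ) • ((lemN b c e a) * d) +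
      (2:ℤ) • ((lemN c a e b) * d) +
      (2:ℤ) • ((lemN c b e a) * d) +
      (8:ℤ) • ((c * (hLC a b e)) * d) +
      (-2:ℤ) • (d * (c * (hLC a b e))) +
      (4:ℤ) • (d * (c * (hLC a e b))) +
      (2:ℤ) • (((hLC a c e) * b) * d) +
      (-8:ℤ) • ((b * (hLC a c e)) * d) +
      (10:ℤ) • (d * (b * (hLC a c e))) +
      (2:ℤ) • (((hLC b c e) * a) * d) +
      (-4:ℤ) • ((hLC a b (d*e)) * c) +
      (-4:ℤ) • (c * (hLC a b (d*e))) +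
      (-8:ℤ) • (c * (hLC b d (a*e))) +
      (-8:ℤ) • (c * (b * (hLC a d e)))
end Helpers2

theorem stmt8 {K A : Type*} [Field K] [CharZero K] [NonUnitalNonAssocRing A]
    [Module K A] [SMulCommClass K A A] [IsScalarTower K A A]
    (hL : ∀ a b : A, (a*a)*b = a*(a*b)) (hR : ∀ a b : A, (a*b)*b = a*(b*b)) (hLC : ∀ a b c : A, a*(b*c) = b*(a*c)) :
    ∀ a b c d e : A, (((a*b)*c)*d)*e = (((a*c)*b)*d)*e ∧ (((a*b)*c)*d)*e = (((a*b)*d)*c)*e := by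
  intro a b c d e
  exact ⟨goal1 (K:=K) hL hR hLC a b c d e, goal2 (K:=K) hL hR hLC a b c d e⟩
end

section
/- Every assosymmetric algebra satisfying left-commutativity a(bc) = b(ac) satisfies ((ab)c)d = ((ac)b)d for all a, b, c, d. -/
theorem stmt10 {K A : Type*} [Field K] [CharZero K] [NonUnitalNonAssocRing A]
    [Module K A] [SMulCommClass K A A] [IsScalarTower K A A]
    (h1 : ∀ a b c : A, (a*b)*c - a*(b*c) = (b*a)*c - b*(a*c)) (h2 : ∀ a b c : A, (a*b)*c - a*(b*c) = (a*c)*b - a*(c*b)) (hLC : ∀ a b c : A, a*(b*c) = b*(a*c)) :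
    ∀ a b c d : A, ((a*b)*c)*d = ((a*c)*b)*d := by
  have key : ∀ x y z : A, (x*y - y*x)*z = 0 := by
    intro x y z
    have h := h1 x y z
    rw [hLC x y z] at h
    have h3 : (x*y)*z = (y*x)*z := sub_left_inj.mp h
    rw [sub_mul, h3, sub_self]
  intro a b c d
  have hu : (a*(b*c - c*b))*d = 0 := by
    have h := h1 a (b*c - c*b) d
    rw [key b c d, key b c a, key b c (a*d), mul_zero, zero_mul, sub_zero,
      zero_sub] at h
    simpa using h
  have h4 : (a*b)*c - (a*c)*b = a*(b*c - c*b) := by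
    have h := h2 a b c
    rw [mul_sub]
    rw [sub_eq_iff_eq_add] at h ⊢
    rw [h]; abel
  have h5 : ((a*b)*c - (a*c)*b)*d = 0 := by rw [h4, hu]
  rw [sub_mul, sub_eq_zero] at h5
  exact h5
end

section
/- Every assosymmetric algebra satisfying left-commutativity a(bc) = b(ac) satisfies d(c(ab)) = 2d((ab)c) + ((ac)d)b - 2((ab)d)c for all a, b, c, d. -/
theorem stmt11 {K A : Type*} [Field K] [CharZero K] [NonUnitalNonAssocRing A]
    [Module K A] [SMulCommClass K A A] [IsScalarTower K A A]
    (h1 : ∀ a b c : A, (a*b)*c - a*(b*c) = (b*a)*c - b*(a*c)) (h2 : ∀ a b c : A, (a*b)*c - a*(b*c) = (a*c)*b - a*(c*b)) (hLC : ∀ a b c : A, a*(b*c) = b*(a*c)) :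
    ∀ a b c d : A, d*(c*(a*b)) = (2:K) • (d*((a*b)*c)) + ((a*c)*d)*b - (2:K) • (((a*b)*d)*c) := by
  have half : ∀ x y : A, x + x = y + y → x = y := by
    intro x y h
    have h2' : (2:K) • x = (2:K) • y := by rw [two_smul, two_smul]; exact h
    calc x = (1:K) • x := (one_smul K x).symm
      _ = ((2⁻¹ : K) * 2) • x := by norm_num
      _ = (2⁻¹:K) • ((2:K) • x) := by rw [mul_smul]
      _ = (2⁻¹:K) • ((2:K) • y) := by rw [h2']
      _ = ((2⁻¹:K) * 2) • y := by rw [mul_smul]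
      _ = (1:K) • y := by norm_num
      _ = y := one_smul K y
  intro a b c d
  have z0 : (((a*b)*c)*d - (a*b)*(c*d)) - ((c*(a*b))*d - c*((a*b)*d)) = 0 := sub_eq_zero_of_eq (h1 (a*b) c d)
  have z1 : (((a*b)*d)*c - (a*b)*(d*c)) - ((d*(a*b))*c - d*((a*b)*c)) = 0 := sub_eq_zero_of_eq (h1 (a*b) d c)
  have z2 : (((a*c)*b)*d - (a*c)*(b*d)) - ((b*(a*c))*d - b*((a*c)*d)) = 0 := sub_eq_zero_of_eq (h1 (a*c) b d)
  have z3 : ((b*d)*(a*c) - b*(d*(a*c))) - ((d*b)*(a*c) - d*(b*(a*c))) = 0 := sub_eq_zero_of_eq (h1 b d (a*c))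
  have z4 : ((b*d)*(c*a) - b*(d*(c*a))) - ((d*b)*(c*a) - d*(b*(c*a))) = 0 := sub_eq_zero_of_eq (h1 b d (c*a))
  have z5 : (((a*d)*b)*c - (a*d)*(b*c)) - ((b*(a*d))*c - b*((a*d)*c)) = 0 := sub_eq_zero_of_eq (h1 (a*d) b c)
  have z6 : ((b*c)*(a*d) - b*(c*(a*d))) - ((c*b)*(a*d) - c*(b*(a*d))) = 0 := sub_eq_zero_of_eq (h1 b c (a*d))
  have z7 : (((a*d)*c)*b - (a*d)*(c*b)) - ((c*(a*d))*b - c*((a*d)*b)) = 0 := sub_eq_zero_of_eq (h1 (a*d) c b)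
  have z8 : (((d*a)*b)*c - (d*a)*(b*c)) - ((b*(d*a))*c - b*((d*a)*c)) = 0 := sub_eq_zero_of_eq (h1 (d*a) b c)
  have z9 : ((b*c)*(d*a) - b*(c*(d*a))) - ((c*b)*(d*a) - c*(b*(d*a))) = 0 := sub_eq_zero_of_eq (h1 b c (d*a))
  have z10 : ((a*d)*(b*c) - a*(d*(b*c))) - ((d*a)*(b*c) - d*(a*(b*c))) = 0 := sub_eq_zero_of_eq (h1 a d (b*c))
  have z11 : ((a*b)*(c*d) - a*(b*(c*d))) - ((b*a)*(c*d) - b*(a*(c*d))) = 0 := sub_eq_zero_of_eq (h1 a b (c*d))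
  have z12 : ((a*b)*(d*c) - a*(b*(d*c))) - ((b*a)*(d*c) - b*(a*(d*c))) = 0 := sub_eq_zero_of_eq (h1 a b (d*c))
  have z13 : (((a*b)*c)*d - (a*b)*(c*d)) - (((a*b)*d)*c - (a*b)*(d*c)) = 0 := sub_eq_zero_of_eq (h2 (a*b) c d)
  have z14 : ((c*(a*b))*d - c*((a*b)*d)) - ((c*d)*(a*b) - c*(d*(a*b))) = 0 := sub_eq_zero_of_eq (h2 c (a*b) d)
  have z15 : (((a*c)*b)*d - (a*c)*(b*d)) - (((a*c)*d)*b - (a*c)*(d*b)) = 0 := sub_eq_zero_of_eq (h2 (a*c) b d)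
  have z16 : ((b*(a*c))*d - b*((a*c)*d)) - ((b*d)*(a*c) - b*(d*(a*c))) = 0 := sub_eq_zero_of_eq (h2 b (a*c) d)
  have z17 : (((c*a)*b)*d - (c*a)*(b*d)) - (((c*a)*d)*b - (c*a)*(d*b)) = 0 := sub_eq_zero_of_eq (h2 (c*a) b d)
  have z18 : (((a*d)*b)*c - (a*d)*(b*c)) - (((a*d)*c)*b - (a*d)*(c*b)) = 0 := sub_eq_zero_of_eq (h2 (a*d) b c)
  have z19 : ((b*(a*d))*c - b*((a*d)*c)) - ((b*c)*(a*d) - b*(c*(a*d))) = 0 := sub_eq_zero_of_eq (h2 b (a*d) c)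
  have z20 : ((b*(d*a))*c - b*((d*a)*c)) - ((b*c)*(d*a) - b*(c*(d*a))) = 0 := sub_eq_zero_of_eq (h2 b (d*a) c)
  have z21 : ((a*(c*b))*d - a*((c*b)*d)) - ((a*d)*(c*b) - a*(d*(c*b))) = 0 := sub_eq_zero_of_eq (h2 a (c*b) d)
  have z22 : ((a*(d*b))*c - a*((d*b)*c)) - ((a*c)*(d*b) - a*(c*(d*b))) = 0 := sub_eq_zero_of_eq (h2 a (d*b) c)
  have z23 : ((a*(c*d))*b - a*((c*d)*b)) - ((a*b)*(c*d) - a*(b*(c*d))) = 0 := sub_eq_zero_of_eq (h2 a (c*d) b)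
  have z24 : (a*b)*(c*d) - c*((a*b)*d) = 0 := sub_eq_zero_of_eq (hLC (a*b) c d)
  have z25 : c*(d*(a*b)) - d*(c*(a*b)) = 0 := sub_eq_zero_of_eq (hLC c d (a*b))
  have z26 : (a*b)*(d*c) - d*((a*b)*c) = 0 := sub_eq_zero_of_eq (hLC (a*b) d c)
  have z27 : (b*a)*(c*d) - c*((b*a)*d) = 0 := sub_eq_zero_of_eq (hLC (b*a) c d)
  have z28 : c*(d*(b*a)) - d*(c*(b*a)) = 0 := sub_eq_zero_of_eq (hLC c d (b*a))
  have z29 : (b*a)*(d*c) - d*((b*a)*c) = 0 := sub_eq_zero_of_eq (hLC (b*a) d c)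
  have z30 : (a*c)*(b*d) - b*((a*c)*d) = 0 := sub_eq_zero_of_eq (hLC (a*c) b d)
  have z31 : (a*c)*(d*b) - d*((a*c)*b) = 0 := sub_eq_zero_of_eq (hLC (a*c) d b)
  have z32 : (c*a)*(b*d) - b*((c*a)*d) = 0 := sub_eq_zero_of_eq (hLC (c*a) b d)
  have z33 : b*(d*(c*a)) - d*(b*(c*a)) = 0 := sub_eq_zero_of_eq (hLC b d (c*a))
  have z34 : (c*a)*(d*b) - d*((c*a)*b) = 0 := sub_eq_zero_of_eq (hLC (c*a) d b)
  have z35 : b*(c*(a*d)) - c*(b*(a*d)) = 0 := sub_eq_zero_of_eq (hLC b c (a*d))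
  have z36 : (a*d)*(c*b) - c*((a*d)*b) = 0 := sub_eq_zero_of_eq (hLC (a*d) c b)
  have z37 : a*(d*(b*c)) - d*(a*(b*c)) = 0 := sub_eq_zero_of_eq (hLC a d (b*c))
  have z38 : (c*b)*(a*d) - a*((c*b)*d) = 0 := sub_eq_zero_of_eq (hLC (c*b) a d)
  have z39 : a*(d*(c*b)) - d*(a*(c*b)) = 0 := sub_eq_zero_of_eq (hLC a d (c*b))
  have z40 : (c*b)*(d*a) - d*((c*b)*a) = 0 := sub_eq_zero_of_eq (hLC (c*b) d a)
  have z41 : (b*d)*(c*a) - c*((b*d)*a) = 0 := sub_eq_zero_of_eq (hLC (b*d) c a)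
  have z42 : (d*b)*(a*c) - a*((d*b)*c) = 0 := sub_eq_zero_of_eq (hLC (d*b) a c)
  have z43 : a*(c*(d*b)) - c*(a*(d*b)) = 0 := sub_eq_zero_of_eq (hLC a c (d*b))
  have z44 : (d*b)*(c*a) - c*((d*b)*a) = 0 := sub_eq_zero_of_eq (hLC (d*b) c a)
  have z45 : (c*d)*(a*b) - a*((c*d)*b) = 0 := sub_eq_zero_of_eq (hLC (c*d) a b)
  have z46 : a*(b*(c*d)) - b*(a*(c*d)) = 0 := sub_eq_zero_of_eq (hLC a b (c*d))
  have z47 : a*(b*(d*c)) - b*(a*(d*c)) = 0 := sub_eq_zero_of_eq (hLC a b (d*c))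
  have z48 : (c*((a*b)*d) - c*(a*(b*d))) - (c*((b*a)*d) - c*(b*(a*d))) = 0 := by rw [← mul_sub, ← mul_sub, h1 a b d]; exact sub_self _
  have z49 : (d*((a*c)*b) - d*(a*(c*b))) - (d*((c*a)*b) - d*(c*(a*b))) = 0 := by rw [← mul_sub, ← mul_sub, h1 a c b]; exact sub_self _
  have z50 : (((a*c)*b)*d - (a*(c*b))*d) - (((c*a)*b)*d - (c*(a*b))*d) = 0 := by rw [← sub_mul, ← sub_mul, h1 a c b]; exact sub_self _
  have z51 : (b*((a*c)*d) - b*(a*(c*d))) - (b*((c*a)*d) - b*(c*(a*d))) = 0 := by rw [← mul_sub, ← mul_sub, h1 a c d]; exact sub_self _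
  have z52 : (((a*c)*d)*b - (a*(c*d))*b) - (((c*a)*d)*b - (c*(a*d))*b) = 0 := by rw [← sub_mul, ← sub_mul, h1 a c d]; exact sub_self _
  have z53 : (((a*d)*b)*c - (a*(d*b))*c) - (((d*a)*b)*c - (d*(a*b))*c) = 0 := by rw [← sub_mul, ← sub_mul, h1 a d b]; exact sub_self _
  have z54 : (d*((b*c)*a) - d*(b*(c*a))) - (d*((c*b)*a) - d*(c*(b*a))) = 0 := by rw [← mul_sub, ← mul_sub, h1 b c a]; exact sub_self _
  have z55 : (c*((b*d)*a) - c*(b*(d*a))) - (c*((d*b)*a) - c*(d*(b*a))) = 0 := by rw [← mul_sub, ← mul_sub, h1 b d a]; exact sub_self _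
  have z56 : (c*((a*b)*d) - c*(a*(b*d))) - (c*((a*d)*b) - c*(a*(d*b))) = 0 := by rw [← mul_sub, ← mul_sub, h2 a b d]; exact sub_self _
  have z57 : (d*((b*a)*c) - d*(b*(a*c))) - (d*((b*c)*a) - d*(b*(c*a))) = 0 := by rw [← mul_sub, ← mul_sub, h2 b a c]; exact sub_self _
  have key : (d*(c*(a*b)) + d*(c*(a*b))) - (((d*((a*b)*c) + d*((a*b)*c)) + ((a*c)*d)*b - (((a*b)*d)*c + ((a*b)*d)*c)) + ((d*((a*b)*c) + d*((a*b)*c)) + ((a*c)*d)*b - (((a*b)*d)*c + ((a*b)*d)*c))) =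
      ((2:ℤ) • ((((a*b)*c)*d - (a*b)*(c*d)) - ((c*(a*b))*d - c*((a*b)*d)))) +
      ((2:ℤ) • ((((a*b)*d)*c - (a*b)*(d*c)) - ((d*(a*b))*c - d*((a*b)*c)))) +
      ((-2:ℤ) • ((((a*c)*b)*d - (a*c)*(b*d)) - ((b*(a*c))*d - b*((a*c)*d)))) +
      ((-2:ℤ) • (((b*d)*(a*c) - b*(d*(a*c))) - ((d*b)*(a*c) - d*(b*(a*c))))) +
      ((-2:ℤ) • (((b*d)*(c*a) - b*(d*(c*a))) - ((d*b)*(c*a) - d*(b*(c*a))))) +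
      (-((((a*d)*b)*c - (a*d)*(b*c)) - ((b*(a*d))*c - b*((a*d)*c)))) +
      (-(((b*c)*(a*d) - b*(c*(a*d))) - ((c*b)*(a*d) - c*(b*(a*d))))) +
      (-((((a*d)*c)*b - (a*d)*(c*b)) - ((c*(a*d))*b - c*((a*d)*b)))) +
      ((2:ℤ) • ((((d*a)*b)*c - (d*a)*(b*c)) - ((b*(d*a))*c - b*((d*a)*c)))) +
      ((2:ℤ) • (((b*c)*(d*a) - b*(c*(d*a))) - ((c*b)*(d*a) - c*(b*(d*a))))) +
      ((-2:ℤ) • (((a*d)*(b*c) - a*(d*(b*c))) - ((d*a)*(b*c) - d*(a*(b*c))))) +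
      ((-2:ℤ) • (((a*b)*(c*d) - a*(b*(c*d))) - ((b*a)*(c*d) - b*(a*(c*d))))) +
      ((-2:ℤ) • (((a*b)*(d*c) - a*(b*(d*c))) - ((b*a)*(d*c) - b*(a*(d*c))))) +
      ((-2:ℤ) • ((((a*b)*c)*d - (a*b)*(c*d)) - (((a*b)*d)*c - (a*b)*(d*c)))) +
      (((c*(a*b))*d - c*((a*b)*d)) - ((c*d)*(a*b) - c*(d*(a*b)))) +
      ((((a*c)*b)*d - (a*c)*(b*d)) - (((a*c)*d)*b - (a*c)*(d*b))) +
      ((-2:ℤ) • (((b*(a*c))*d - b*((a*c)*d)) - ((b*d)*(a*c) - b*(d*(a*c))))) +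
      ((((c*a)*b)*d - (c*a)*(b*d)) - (((c*a)*d)*b - (c*a)*(d*b))) +
      (-((((a*d)*b)*c - (a*d)*(b*c)) - (((a*d)*c)*b - (a*d)*(c*b)))) +
      (-(((b*(a*d))*c - b*((a*d)*c)) - ((b*c)*(a*d) - b*(c*(a*d))))) +
      ((2:ℤ) • (((b*(d*a))*c - b*((d*a)*c)) - ((b*c)*(d*a) - b*(c*(d*a))))) +
      (((a*(c*b))*d - a*((c*b)*d)) - ((a*d)*(c*b) - a*(d*(c*b)))) +
      ((2:ℤ) • (((a*(d*b))*c - a*((d*b)*c)) - ((a*c)*(d*b) - a*(c*(d*b))))) +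
      (-(((a*(c*d))*b - a*((c*d)*b)) - ((a*b)*(c*d) - a*(b*(c*d))))) +
      ((a*b)*(c*d) - c*((a*b)*d)) +
      (-(c*(d*(a*b)) - d*(c*(a*b)))) +
      ((6:ℤ) • ((a*b)*(d*c) - d*((a*b)*c))) +
      ((-2:ℤ) • ((b*a)*(c*d) - c*((b*a)*d))) +
      ((-2:ℤ) • (c*(d*(b*a)) - d*(c*(b*a)))) +
      ((-2:ℤ) • ((b*a)*(d*c) - d*((b*a)*c))) +
      (-((a*c)*(b*d) - b*((a*c)*d))) +
      ((a*c)*(d*b) - d*((a*c)*b)) +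
      ((c*a)*(b*d) - b*((c*a)*d)) +
      ((-2:ℤ) • (b*(d*(c*a)) - d*(b*(c*a)))) +
      (-((c*a)*(d*b) - d*((c*a)*b))) +
      (b*(c*(a*d)) - c*(b*(a*d))) +
      ((a*d)*(c*b) - c*((a*d)*b)) +
      ((-2:ℤ) • (a*(d*(b*c)) - d*(a*(b*c)))) +
      (-((c*b)*(a*d) - a*((c*b)*d))) +
      (-(a*(d*(c*b)) - d*(a*(c*b)))) +
      ((2:ℤ) • ((c*b)*(d*a) - d*((c*b)*a))) +
      ((2:ℤ) • ((b*d)*(c*a) - c*((b*d)*a))) +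
      ((-2:ℤ) • ((d*b)*(a*c) - a*((d*b)*c))) +
      ((-2:ℤ) • (a*(c*(d*b)) - c*(a*(d*b)))) +
      ((-2:ℤ) • ((d*b)*(c*a) - c*((d*b)*a))) +
      ((c*d)*(a*b) - a*((c*d)*b)) +
      (-(a*(b*(c*d)) - b*(a*(c*d)))) +
      ((-2:ℤ) • (a*(b*(d*c)) - b*(a*(d*c)))) +
      ((2:ℤ) • ((c*((a*b)*d) - c*(a*(b*d))) - (c*((b*a)*d) - c*(b*(a*d))))) +
      ((d*((a*c)*b) - d*(a*(c*b))) - (d*((c*a)*b) - d*(c*(a*b)))) +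
      ((((a*c)*b)*d - (a*(c*b))*d) - (((c*a)*b)*d - (c*(a*b))*d)) +
      (-((b*((a*c)*d) - b*(a*(c*d))) - (b*((c*a)*d) - b*(c*(a*d))))) +
      (-((((a*c)*d)*b - (a*(c*d))*b) - (((c*a)*d)*b - (c*(a*d))*b))) +
      ((2:ℤ) • ((((a*d)*b)*c - (a*(d*b))*c) - (((d*a)*b)*c - (d*(a*b))*c))) +
      ((-2:ℤ) • ((d*((b*c)*a) - d*(b*(c*a))) - (d*((c*b)*a) - d*(c*(b*a))))) +
      ((2:ℤ) • ((c*((b*d)*a) - c*(b*(d*a))) - (c*((d*b)*a) - c*(d*(b*a))))) +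
      ((-2:ℤ) • ((c*((a*b)*d) - c*(a*(b*d))) - (c*((a*d)*b) - c*(a*(d*b))))) +
      ((-2:ℤ) • ((d*((b*a)*c) - d*(b*(a*c))) - (d*((b*c)*a) - d*(b*(c*a))))) := by abel
  rw [z0, z1, z2, z3, z4, z5, z6, z7, z8, z9, z10, z11, z12, z13, z14, z15, z16, z17, z18, z19, z20, z21, z22, z23, z24, z25, z26, z27, z28, z29, z30, z31, z32, z33, z34, z35, z36, z37, z38, z39, z40, z41, z42, z43, z44, z45, z46, z47, z48, z49, z50, z51, z52, z53, z54, z55, z56, z57] at key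
  simp only [smul_zero, add_zero, zero_add, neg_zero, sub_zero, zero_sub, sub_self] at key
  rw [sub_eq_zero] at key
  rw [two_smul K (d*((a*b)*c)), two_smul K (((a*b)*d)*c)]
  exact half _ _ key
end

section
/- Every assosymmetric algebra satisfying left-commutativity a(bc) = b(ac) satisfies d((ac)b) = d((ab)c) + ((ac)d)b - ((ab)d)c for all a, b, c, d. -/
theorem stmt12 {K A : Type*} [Field K] [CharZero K] [NonUnitalNonAssocRing A]
    [Module K A] [SMulCommClass K A A] [IsScalarTower K A A]
    (h1 : ∀ a b c : A, (a*b)*c - a*(b*c) = (b*a)*c - b*(a*c)) (h2 : ∀ a b c : A, (a*b)*c - a*(b*c) = (a*c)*b - a*(c*b)) (hLC : ∀ a b c : A, a*(b*c) = b*(a*c)) :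
    ∀ a b c d : A, d*((a*c)*b) = d*((a*b)*c) + ((a*c)*d)*b - ((a*b)*d)*c := by
  -- cyclic symmetry of the associator
  have cyc : ∀ x y z : A, (x*y)*z - x*(y*z) = (y*z)*x - y*(z*x) :=
    fun x y z => (h1 x y z).trans (h2 y x z)
  -- left multiplication moves into the third slot of the associator
  have key : ∀ w x y z : A, w*((x*y)*z - x*(y*z)) = (x*y)*(w*z) - x*(y*(w*z)) := by
    intro w x y z
    rw [mul_sub, hLC w (x*y) z, hLC w x (y*z), hLC w y z]
  -- the crucial symmetry S(ab,d,c) = S(ac,d,b)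
  intro a b c d
  have hU : ((a*b)*d)*c - (a*b)*(d*c) = ((a*c)*d)*b - (a*c)*(d*b) := by
    rw [cyc (a*b) d c, cyc (a*c) d b, ← key a d c b, ← key a d b c, h2 d c b]
  have e1 : d*((a*c)*b) = (a*c)*(d*b) := hLC d (a*c) b
  have e2 : d*((a*b)*c) = (a*b)*(d*c) := hLC d (a*b) c
  rw [e1, e2, eq_add_of_sub_eq hU.symm]
  abel
end

section
/- Every assosymmetric algebra satisfying left-commutativity a(bc) = b(ac) satisfies c((ad)b) = d((ac)b) for all a, b, c, d. -/
set_option maxHeartbeats 4000000 in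
theorem stmt13 {K A : Type*} [Field K] [CharZero K] [NonUnitalNonAssocRing A]
    [Module K A] [SMulCommClass K A A] [IsScalarTower K A A]
    (h1 : ∀ a b c : A, (a*b)*c - a*(b*c) = (b*a)*c - b*(a*c)) (h2 : ∀ a b c : A, (a*b)*c - a*(b*c) = (a*c)*b - a*(c*b)) (hLC : ∀ a b c : A, a*(b*c) = b*(a*c)) :
    ∀ a b c d : A, c*((a*d)*b) = d*((a*c)*b) := by
  intro a b c d
  have e0 : (((a*b)*c)*d - (a*b)*(c*d)) - ((c*(a*b))*d - c*((a*b)*d)) = (0:A) := sub_eq_zero_of_eq (h1 (a*b) c d)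
  have e1 : ((c*d)*(a*b) - c*(d*(a*b))) - ((d*c)*(a*b) - d*(c*(a*b))) = (0:A) := sub_eq_zero_of_eq (h1 c d (a*b))
  have e2 : (((a*b)*d)*c - (a*b)*(d*c)) - ((d*(a*b))*c - d*((a*b)*c)) = (0:A) := sub_eq_zero_of_eq (h1 (a*b) d c)
  have e3 : ((b*d)*(a*c) - b*(d*(a*c))) - ((d*b)*(a*c) - d*(b*(a*c))) = (0:A) := sub_eq_zero_of_eq (h1 b d (a*c))
  have e4 : (((a*c)*d)*b - (a*c)*(d*b)) - ((d*(a*c))*b - d*((a*c)*b)) = (0:A) := sub_eq_zero_of_eq (h1 (a*c) d b)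
  have e5 : (((a*d)*b)*c - (a*d)*(b*c)) - ((b*(a*d))*c - b*((a*d)*c)) = (0:A) := sub_eq_zero_of_eq (h1 (a*d) b c)
  have e6 : (((a*d)*c)*b - (a*d)*(c*b)) - ((c*(a*d))*b - c*((a*d)*b)) = (0:A) := sub_eq_zero_of_eq (h1 (a*d) c b)
  have e7 : (((b*a)*c)*d - (b*a)*(c*d)) - ((c*(b*a))*d - c*((b*a)*d)) = (0:A) := sub_eq_zero_of_eq (h1 (b*a) c d)
  have e8 : (((b*a)*d)*c - (b*a)*(d*c)) - ((d*(b*a))*c - d*((b*a)*c)) = (0:A) := sub_eq_zero_of_eq (h1 (b*a) d c)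
  have e9 : (((b*c)*a)*d - (b*c)*(a*d)) - ((a*(b*c))*d - a*((b*c)*d)) = (0:A) := sub_eq_zero_of_eq (h1 (b*c) a d)
  have e10 : ((a*d)*(b*c) - a*(d*(b*c))) - ((d*a)*(b*c) - d*(a*(b*c))) = (0:A) := sub_eq_zero_of_eq (h1 a d (b*c))
  have e11 : (((b*d)*a)*c - (b*d)*(a*c)) - ((a*(b*d))*c - a*((b*d)*c)) = (0:A) := sub_eq_zero_of_eq (h1 (b*d) a c)
  have e12 : ((a*c)*(b*d) - a*(c*(b*d))) - ((c*a)*(b*d) - c*(a*(b*d))) = (0:A) := sub_eq_zero_of_eq (h1 a c (b*d))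
  have e13 : (((b*d)*c)*a - (b*d)*(c*a)) - ((c*(b*d))*a - c*((b*d)*a)) = (0:A) := sub_eq_zero_of_eq (h1 (b*d) c a)
  have e14 : (((c*a)*b)*d - (c*a)*(b*d)) - ((b*(c*a))*d - b*((c*a)*d)) = (0:A) := sub_eq_zero_of_eq (h1 (c*a) b d)
  have e15 : (((c*a)*d)*b - (c*a)*(d*b)) - ((d*(c*a))*b - d*((c*a)*b)) = (0:A) := sub_eq_zero_of_eq (h1 (c*a) d b)
  have e16 : (((c*b)*a)*d - (c*b)*(a*d)) - ((a*(c*b))*d - a*((c*b)*d)) = (0:A) := sub_eq_zero_of_eq (h1 (c*b) a d)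
  have e17 : ((a*d)*(c*b) - a*(d*(c*b))) - ((d*a)*(c*b) - d*(a*(c*b))) = (0:A) := sub_eq_zero_of_eq (h1 a d (c*b))
  have e18 : (((c*d)*a)*b - (c*d)*(a*b)) - ((a*(c*d))*b - a*((c*d)*b)) = (0:A) := sub_eq_zero_of_eq (h1 (c*d) a b)
  have e19 : (((c*d)*b)*a - (c*d)*(b*a)) - ((b*(c*d))*a - b*((c*d)*a)) = (0:A) := sub_eq_zero_of_eq (h1 (c*d) b a)
  have e20 : (((d*a)*b)*c - (d*a)*(b*c)) - ((b*(d*a))*c - b*((d*a)*c)) = (0:A) := sub_eq_zero_of_eq (h1 (d*a) b c)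
  have e21 : ((b*c)*(d*a) - b*(c*(d*a))) - ((c*b)*(d*a) - c*(b*(d*a))) = (0:A) := sub_eq_zero_of_eq (h1 b c (d*a))
  have e22 : (((d*a)*c)*b - (d*a)*(c*b)) - ((c*(d*a))*b - c*((d*a)*b)) = (0:A) := sub_eq_zero_of_eq (h1 (d*a) c b)
  have e23 : (((d*b)*a)*c - (d*b)*(a*c)) - ((a*(d*b))*c - a*((d*b)*c)) = (0:A) := sub_eq_zero_of_eq (h1 (d*b) a c)
  have e24 : ((a*c)*(d*b) - a*(c*(d*b))) - ((c*a)*(d*b) - c*(a*(d*b))) = (0:A) := sub_eq_zero_of_eq (h1 a c (d*b))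
  have e25 : (((d*b)*c)*a - (d*b)*(c*a)) - ((c*(d*b))*a - c*((d*b)*a)) = (0:A) := sub_eq_zero_of_eq (h1 (d*b) c a)
  have e26 : (((d*c)*a)*b - (d*c)*(a*b)) - ((a*(d*c))*b - a*((d*c)*b)) = (0:A) := sub_eq_zero_of_eq (h1 (d*c) a b)
  have e27 : ((a*b)*(d*c) - a*(b*(d*c))) - ((b*a)*(d*c) - b*(a*(d*c))) = (0:A) := sub_eq_zero_of_eq (h1 a b (d*c))
  have e28 : (((d*c)*b)*a - (d*c)*(b*a)) - ((b*(d*c))*a - b*((d*c)*a)) = (0:A) := sub_eq_zero_of_eq (h1 (d*c) b a)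
  have e29 : (a*((b*c)*d) - a*(b*(c*d))) - (a*((c*b)*d) - a*(c*(b*d))) = (0:A) := sub_eq_zero_of_eq (by rw [← mul_sub, ← mul_sub]; exact congrArg (fun t => a*t) (h1 b c d))
  have e30 : (((b*c)*d)*a - (b*(c*d))*a) - (((c*b)*d)*a - (c*(b*d))*a) = (0:A) := sub_eq_zero_of_eq (by rw [← sub_mul, ← sub_mul]; exact congrArg (fun t => t*a) (h1 b c d))
  have e31 : (a*((b*d)*c) - a*(b*(d*c))) - (a*((d*b)*c) - a*(d*(b*c))) = (0:A) := sub_eq_zero_of_eq (by rw [← mul_sub, ← mul_sub]; exact congrArg (fun t => a*t) (h1 b d c))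
  have e32 : (a*((c*d)*b) - a*(c*(d*b))) - (a*((d*c)*b) - a*(d*(c*b))) = (0:A) := sub_eq_zero_of_eq (by rw [← mul_sub, ← mul_sub]; exact congrArg (fun t => a*t) (h1 c d b))
  have e33 : (b*((a*c)*d) - b*(a*(c*d))) - (b*((c*a)*d) - b*(c*(a*d))) = (0:A) := sub_eq_zero_of_eq (by rw [← mul_sub, ← mul_sub]; exact congrArg (fun t => b*t) (h1 a c d))
  have e34 : (((a*c)*d)*b - (a*(c*d))*b) - (((c*a)*d)*b - (c*(a*d))*b) = (0:A) := sub_eq_zero_of_eq (by rw [← sub_mul, ← sub_mul]; exact congrArg (fun t => t*b) (h1 a c d))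
  have e35 : (b*((a*d)*c) - b*(a*(d*c))) - (b*((d*a)*c) - b*(d*(a*c))) = (0:A) := sub_eq_zero_of_eq (by rw [← mul_sub, ← mul_sub]; exact congrArg (fun t => b*t) (h1 a d c))
  have e36 : (((a*d)*c)*b - (a*(d*c))*b) - (((d*a)*c)*b - (d*(a*c))*b) = (0:A) := sub_eq_zero_of_eq (by rw [← sub_mul, ← sub_mul]; exact congrArg (fun t => t*b) (h1 a d c))
  have e37 : (b*((c*d)*a) - b*(c*(d*a))) - (b*((d*c)*a) - b*(d*(c*a))) = (0:A) := sub_eq_zero_of_eq (by rw [← mul_sub, ← mul_sub]; exact congrArg (fun t => b*t) (h1 c d a))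
  have e38 : (((c*d)*a)*b - (c*(d*a))*b) - (((d*c)*a)*b - (d*(c*a))*b) = (0:A) := sub_eq_zero_of_eq (by rw [← sub_mul, ← sub_mul]; exact congrArg (fun t => t*b) (h1 c d a))
  have e39 : (c*((a*b)*d) - c*(a*(b*d))) - (c*((b*a)*d) - c*(b*(a*d))) = (0:A) := sub_eq_zero_of_eq (by rw [← mul_sub, ← mul_sub]; exact congrArg (fun t => c*t) (h1 a b d))
  have e40 : (((a*b)*d)*c - (a*(b*d))*c) - (((b*a)*d)*c - (b*(a*d))*c) = (0:A) := sub_eq_zero_of_eq (by rw [← sub_mul, ← sub_mul]; exact congrArg (fun t => t*c) (h1 a b d))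
  have e41 : (c*((a*d)*b) - c*(a*(d*b))) - (c*((d*a)*b) - c*(d*(a*b))) = (0:A) := sub_eq_zero_of_eq (by rw [← mul_sub, ← mul_sub]; exact congrArg (fun t => c*t) (h1 a d b))
  have e42 : (((a*d)*b)*c - (a*(d*b))*c) - (((d*a)*b)*c - (d*(a*b))*c) = (0:A) := sub_eq_zero_of_eq (by rw [← sub_mul, ← sub_mul]; exact congrArg (fun t => t*c) (h1 a d b))
  have e43 : (c*((b*d)*a) - c*(b*(d*a))) - (c*((d*b)*a) - c*(d*(b*a))) = (0:A) := sub_eq_zero_of_eq (by rw [← mul_sub, ← mul_sub]; exact congrArg (fun t => c*t) (h1 b d a))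
  have e44 : (((b*d)*a)*c - (b*(d*a))*c) - (((d*b)*a)*c - (d*(b*a))*c) = (0:A) := sub_eq_zero_of_eq (by rw [← sub_mul, ← sub_mul]; exact congrArg (fun t => t*c) (h1 b d a))
  have e45 : (((a*b)*c)*d - (a*(b*c))*d) - (((b*a)*c)*d - (b*(a*c))*d) = (0:A) := sub_eq_zero_of_eq (by rw [← sub_mul, ← sub_mul]; exact congrArg (fun t => t*d) (h1 a b c))
  have e46 : (((a*c)*b)*d - (a*(c*b))*d) - (((c*a)*b)*d - (c*(a*b))*d) = (0:A) := sub_eq_zero_of_eq (by rw [← sub_mul, ← sub_mul]; exact congrArg (fun t => t*d) (h1 a c b))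
  have e47 : (((a*b)*c)*d - (a*b)*(c*d)) - (((a*b)*d)*c - (a*b)*(d*c)) = (0:A) := sub_eq_zero_of_eq (h2 (a*b) c d)
  have e48 : ((c*(a*b))*d - c*((a*b)*d)) - ((c*d)*(a*b) - c*(d*(a*b))) = (0:A) := sub_eq_zero_of_eq (h2 c (a*b) d)
  have e49 : (((a*c)*b)*d - (a*c)*(b*d)) - (((a*c)*d)*b - (a*c)*(d*b)) = (0:A) := sub_eq_zero_of_eq (h2 (a*c) b d)
  have e50 : ((b*(a*c))*d - b*((a*c)*d)) - ((b*d)*(a*c) - b*(d*(a*c))) = (0:A) := sub_eq_zero_of_eq (h2 b (a*c) d)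
  have e51 : (((a*d)*b)*c - (a*d)*(b*c)) - (((a*d)*c)*b - (a*d)*(c*b)) = (0:A) := sub_eq_zero_of_eq (h2 (a*d) b c)
  have e52 : ((b*(a*d))*c - b*((a*d)*c)) - ((b*c)*(a*d) - b*(c*(a*d))) = (0:A) := sub_eq_zero_of_eq (h2 b (a*d) c)
  have e53 : (((b*a)*c)*d - (b*a)*(c*d)) - (((b*a)*d)*c - (b*a)*(d*c)) = (0:A) := sub_eq_zero_of_eq (h2 (b*a) c d)
  have e54 : ((c*(b*a))*d - c*((b*a)*d)) - ((c*d)*(b*a) - c*(d*(b*a))) = (0:A) := sub_eq_zero_of_eq (h2 c (b*a) d)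
  have e55 : (((b*c)*a)*d - (b*c)*(a*d)) - (((b*c)*d)*a - (b*c)*(d*a)) = (0:A) := sub_eq_zero_of_eq (h2 (b*c) a d)
  have e56 : ((a*(b*c))*d - a*((b*c)*d)) - ((a*d)*(b*c) - a*(d*(b*c))) = (0:A) := sub_eq_zero_of_eq (h2 a (b*c) d)
  have e57 : (((b*d)*a)*c - (b*d)*(a*c)) - (((b*d)*c)*a - (b*d)*(c*a)) = (0:A) := sub_eq_zero_of_eq (h2 (b*d) a c)
  have e58 : ((a*(b*d))*c - a*((b*d)*c)) - ((a*c)*(b*d) - a*(c*(b*d))) = (0:A) := sub_eq_zero_of_eq (h2 a (b*d) c)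
  have e59 : (((c*a)*b)*d - (c*a)*(b*d)) - (((c*a)*d)*b - (c*a)*(d*b)) = (0:A) := sub_eq_zero_of_eq (h2 (c*a) b d)
  have e60 : ((b*(c*a))*d - b*((c*a)*d)) - ((b*d)*(c*a) - b*(d*(c*a))) = (0:A) := sub_eq_zero_of_eq (h2 b (c*a) d)
  have e61 : (((c*b)*a)*d - (c*b)*(a*d)) - (((c*b)*d)*a - (c*b)*(d*a)) = (0:A) := sub_eq_zero_of_eq (h2 (c*b) a d)
  have e62 : ((a*(c*b))*d - a*((c*b)*d)) - ((a*d)*(c*b) - a*(d*(c*b))) = (0:A) := sub_eq_zero_of_eq (h2 a (c*b) d)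
  have e63 : (((c*d)*a)*b - (c*d)*(a*b)) - (((c*d)*b)*a - (c*d)*(b*a)) = (0:A) := sub_eq_zero_of_eq (h2 (c*d) a b)
  have e64 : ((a*(c*d))*b - a*((c*d)*b)) - ((a*b)*(c*d) - a*(b*(c*d))) = (0:A) := sub_eq_zero_of_eq (h2 a (c*d) b)
  have e65 : (((d*a)*b)*c - (d*a)*(b*c)) - (((d*a)*c)*b - (d*a)*(c*b)) = (0:A) := sub_eq_zero_of_eq (h2 (d*a) b c)
  have e66 : ((b*(d*a))*c - b*((d*a)*c)) - ((b*c)*(d*a) - b*(c*(d*a))) = (0:A) := sub_eq_zero_of_eq (h2 b (d*a) c)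
  have e67 : (((d*b)*a)*c - (d*b)*(a*c)) - (((d*b)*c)*a - (d*b)*(c*a)) = (0:A) := sub_eq_zero_of_eq (h2 (d*b) a c)
  have e68 : ((a*(d*b))*c - a*((d*b)*c)) - ((a*c)*(d*b) - a*(c*(d*b))) = (0:A) := sub_eq_zero_of_eq (h2 a (d*b) c)
  have e69 : (((d*c)*a)*b - (d*c)*(a*b)) - (((d*c)*b)*a - (d*c)*(b*a)) = (0:A) := sub_eq_zero_of_eq (h2 (d*c) a b)
  have e70 : ((a*(d*c))*b - a*((d*c)*b)) - ((a*b)*(d*c) - a*(b*(d*c))) = (0:A) := sub_eq_zero_of_eq (h2 a (d*c) b)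
  have e71 : (a*((b*c)*d) - a*(b*(c*d))) - (a*((b*d)*c) - a*(b*(d*c))) = (0:A) := sub_eq_zero_of_eq (by rw [← mul_sub, ← mul_sub]; exact congrArg (fun t => a*t) (h2 b c d))
  have e72 : (((b*c)*d)*a - (b*(c*d))*a) - (((b*d)*c)*a - (b*(d*c))*a) = (0:A) := sub_eq_zero_of_eq (by rw [← sub_mul, ← sub_mul]; exact congrArg (fun t => t*a) (h2 b c d))
  have e73 : (a*((c*b)*d) - a*(c*(b*d))) - (a*((c*d)*b) - a*(c*(d*b))) = (0:A) := sub_eq_zero_of_eq (by rw [← mul_sub, ← mul_sub]; exact congrArg (fun t => a*t) (h2 c b d))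
  have e74 : (((c*b)*d)*a - (c*(b*d))*a) - (((c*d)*b)*a - (c*(d*b))*a) = (0:A) := sub_eq_zero_of_eq (by rw [← sub_mul, ← sub_mul]; exact congrArg (fun t => t*a) (h2 c b d))
  have e75 : (b*((a*c)*d) - b*(a*(c*d))) - (b*((a*d)*c) - b*(a*(d*c))) = (0:A) := sub_eq_zero_of_eq (by rw [← mul_sub, ← mul_sub]; exact congrArg (fun t => b*t) (h2 a c d))
  have e76 : (((a*c)*d)*b - (a*(c*d))*b) - (((a*d)*c)*b - (a*(d*c))*b) = (0:A) := sub_eq_zero_of_eq (by rw [← sub_mul, ← sub_mul]; exact congrArg (fun t => t*b) (h2 a c d))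
  have e77 : (b*((c*a)*d) - b*(c*(a*d))) - (b*((c*d)*a) - b*(c*(d*a))) = (0:A) := sub_eq_zero_of_eq (by rw [← mul_sub, ← mul_sub]; exact congrArg (fun t => b*t) (h2 c a d))
  have e78 : (((c*a)*d)*b - (c*(a*d))*b) - (((c*d)*a)*b - (c*(d*a))*b) = (0:A) := sub_eq_zero_of_eq (by rw [← sub_mul, ← sub_mul]; exact congrArg (fun t => t*b) (h2 c a d))
  have e79 : (c*((a*b)*d) - c*(a*(b*d))) - (c*((a*d)*b) - c*(a*(d*b))) = (0:A) := sub_eq_zero_of_eq (by rw [← mul_sub, ← mul_sub]; exact congrArg (fun t => c*t) (h2 a b d))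
  have e80 : (((a*b)*d)*c - (a*(b*d))*c) - (((a*d)*b)*c - (a*(d*b))*c) = (0:A) := sub_eq_zero_of_eq (by rw [← sub_mul, ← sub_mul]; exact congrArg (fun t => t*c) (h2 a b d))
  have e81 : (c*((b*a)*d) - c*(b*(a*d))) - (c*((b*d)*a) - c*(b*(d*a))) = (0:A) := sub_eq_zero_of_eq (by rw [← mul_sub, ← mul_sub]; exact congrArg (fun t => c*t) (h2 b a d))
  have e82 : ((a*b)*(c*d)) - (c*((a*b)*d)) = (0:A) := sub_eq_zero_of_eq (hLC (a*b) c d)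
  have e83 : (c*(d*(a*b))) - (d*(c*(a*b))) = (0:A) := sub_eq_zero_of_eq (hLC c d (a*b))
  have e84 : ((a*b)*(d*c)) - (d*((a*b)*c)) = (0:A) := sub_eq_zero_of_eq (hLC (a*b) d c)
  have e85 : ((a*c)*(b*d)) - (b*((a*c)*d)) = (0:A) := sub_eq_zero_of_eq (hLC (a*c) b d)
  have e86 : (b*(d*(a*c))) - (d*(b*(a*c))) = (0:A) := sub_eq_zero_of_eq (hLC b d (a*c))
  have e87 : ((a*c)*(d*b)) - (d*((a*c)*b)) = (0:A) := sub_eq_zero_of_eq (hLC (a*c) d b)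
  have e88 : ((a*d)*(b*c)) - (b*((a*d)*c)) = (0:A) := sub_eq_zero_of_eq (hLC (a*d) b c)
  have e89 : (b*(c*(a*d))) - (c*(b*(a*d))) = (0:A) := sub_eq_zero_of_eq (hLC b c (a*d))
  have e90 : ((a*d)*(c*b)) - (c*((a*d)*b)) = (0:A) := sub_eq_zero_of_eq (hLC (a*d) c b)
  have e91 : ((b*a)*(c*d)) - (c*((b*a)*d)) = (0:A) := sub_eq_zero_of_eq (hLC (b*a) c d)
  have e92 : ((b*a)*(d*c)) - (d*((b*a)*c)) = (0:A) := sub_eq_zero_of_eq (hLC (b*a) d c)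
  have e93 : ((b*c)*(a*d)) - (a*((b*c)*d)) = (0:A) := sub_eq_zero_of_eq (hLC (b*c) a d)
  have e94 : (a*(d*(b*c))) - (d*(a*(b*c))) = (0:A) := sub_eq_zero_of_eq (hLC a d (b*c))
  have e95 : ((b*d)*(a*c)) - (a*((b*d)*c)) = (0:A) := sub_eq_zero_of_eq (hLC (b*d) a c)
  have e96 : (a*(c*(b*d))) - (c*(a*(b*d))) = (0:A) := sub_eq_zero_of_eq (hLC a c (b*d))
  have e97 : ((c*a)*(d*b)) - (d*((c*a)*b)) = (0:A) := sub_eq_zero_of_eq (hLC (c*a) d b)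
  have e98 : (a*(d*(c*b))) - (d*(a*(c*b))) = (0:A) := sub_eq_zero_of_eq (hLC a d (c*b))
  have e99 : ((c*d)*(a*b)) - (a*((c*d)*b)) = (0:A) := sub_eq_zero_of_eq (hLC (c*d) a b)
  have key : (8:ℤ) • (c*((a*d)*b) - d*((a*c)*b)) = (6:ℤ) • ((((a*b)*c)*d - (a*b)*(c*d)) - ((c*(a*b))*d - c*((a*b)*d))) + (-2:ℤ) • (((c*d)*(a*b) - c*(d*(a*b))) - ((d*c)*(a*b) - d*(c*(a*b)))) + (2:ℤ) • ((((a*b)*d)*c - (a*b)*(d*c)) - ((d*(a*b))*c - d*((a*b)*c))) + (-2:ℤ) • (((b*d)*(a*c) - b*(d*(a*c))) - ((d*b)*(a*c) - d*(b*(a*c)))) + (-6:ℤ) • ((((a*c)*d)*b - (a*c)*(d*b)) - ((d*(a*c))*b - d*((a*c)*b))) + (-3:ℤ) • ((((a*d)*b)*c - (a*d)*(b*c)) - ((b*(a*d))*c - b*((a*d)*c))) + (3:ℤ) • ((((a*d)*c)*b - (a*d)*(c*b)) - ((c*(a*d))*b - c*((a*d)*b))) + (-5:ℤ) • ((((b*a)*c)*d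 - (b*a)*(c*d)) - ((c*(b*a))*d - c*((b*a)*d))) + (2:ℤ) • ((((b*a)*d)*c - (b*a)*(d*c)) - ((d*(b*a))*c - d*((b*a)*c))) + (9:ℤ) • ((((b*c)*a)*d - (b*c)*(a*d)) - ((a*(b*c))*d - a*((b*c)*d))) + (-2:ℤ) • (((a*d)*(b*c) - a*(d*(b*c))) - ((d*a)*(b*c) - d*(a*(b*c)))) + (4:ℤ) • ((((b*d)*a)*c - (b*d)*(a*c)) - ((a*(b*d))*c - a*((b*d)*c))) + (-3:ℤ) • (((a*c)*(b*d) - a*(c*(b*d))) - ((c*a)*(b*d) - c*(a*(b*d)))) + (-10:ℤ) • ((((b*d)*c)*a - (b*d)*(c*a)) - ((c*(b*d))*a - c*((b*d)*a))) + (4:ℤ) • ((((c*a)*b)*d - (c*a)*(b*d)) - ((b*(c*a))*d - b*((c*a)*d))) + (2:ℤ) • ((((c*a)*d)*b - (c*a)*(d*b)) - ((d*(c*a))*b - d*((c*a)*b))) + (-10:ℤ) • ((((c*b)*a)*d - (c*b)*(a*d)) - ((a*(c*b))*d - a*((c*b)*d))) + (6:ℤ) • (((a*d)*(c*b) - a*(d*(c*b)))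 - ((d*a)*(c*b) - d*(a*(c*b)))) + (-7:ℤ) • ((((c*d)*a)*b - (c*d)*(a*b)) - ((a*(c*d))*b - a*((c*d)*b))) + (9:ℤ) • ((((c*d)*b)*a - (c*d)*(b*a)) - ((b*(c*d))*a - b*((c*d)*a))) + (-1:ℤ) • ((((d*a)*b)*c - (d*a)*(b*c)) - ((b*(d*a))*c - b*((d*a)*c))) + (10:ℤ) • (((b*c)*(d*a) - b*(c*(d*a))) - ((c*b)*(d*a) - c*(b*(d*a)))) + (-3:ℤ) • ((((d*a)*c)*b - (d*a)*(c*b)) - ((c*(d*a))*b - c*((d*a)*b))) + (-3:ℤ) • ((((d*b)*a)*c - (d*b)*(a*c)) - ((a*(d*b))*c - a*((d*b)*c))) + (-1:ℤ) • (((a*c)*(d*b) - a*(c*(d*b))) - ((c*a)*(d*b) - c*(a*(d*b)))) + (5:ℤ) • ((((d*b)*c)*a - (d*b)*(c*a)) - ((c*(d*b))*a - c*((d*b)*a))) + (6:ℤ) • ((((d*c)*a)*b - (d*c)*(a*b)) - ((a*(d*c))*b - a*((d*c)*b))) + (3:ℤ) • (((a*b)*(d*c) - a*(b*(d*c))) -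 ((b*a)*(d*c) - b*(a*(d*c)))) + (-4:ℤ) • ((((d*c)*b)*a - (d*c)*(b*a)) - ((b*(d*c))*a - b*((d*c)*a))) + (-1:ℤ) • ((a*((b*c)*d) - a*(b*(c*d))) - (a*((c*b)*d) - a*(c*(b*d)))) + (-5:ℤ) • ((((b*c)*d)*a - (b*(c*d))*a) - (((c*b)*d)*a - (c*(b*d))*a)) + (-7:ℤ) • ((a*((b*d)*c) - a*(b*(d*c))) - (a*((d*b)*c) - a*(d*(b*c)))) + (7:ℤ) • ((a*((c*d)*b) - a*(c*(d*b))) - (a*((d*c)*b) - a*(d*(c*b)))) + (5:ℤ) • ((b*((a*c)*d) - b*(a*(c*d))) - (b*((c*a)*d) - b*(c*(a*d)))) + (2:ℤ) • ((((a*c)*d)*b - (a*(c*d))*b) - (((c*a)*d)*b - (c*(a*d))*b)) + (-2:ℤ) • ((b*((a*d)*c) - b*(a*(d*c))) - (b*((d*a)*c) - b*(d*(a*c)))) + (-6:ℤ) • ((((a*d)*c)*b - (a*(d*c))*b) - (((d*a)*c)*b - (d*(a*c))*b)) + (-4:ℤ) • ((b*((c*d)*a) - b*(c*(d*a))) - (b*((d*c)*a)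 - b*(d*(c*a)))) + (2:ℤ) • ((((c*d)*a)*b - (c*(d*a))*b) - (((d*c)*a)*b - (d*(c*a))*b)) + (-3:ℤ) • ((c*((a*b)*d) - c*(a*(b*d))) - (c*((b*a)*d) - c*(b*(a*d)))) + (-1:ℤ) • ((((a*b)*d)*c - (a*(b*d))*c) - (((b*a)*d)*c - (b*(a*d))*c)) + (-3:ℤ) • ((c*((a*d)*b) - c*(a*(d*b))) - (c*((d*a)*b) - c*(d*(a*b)))) + (2:ℤ) • ((((a*d)*b)*c - (a*(d*b))*c) - (((d*a)*b)*c - (d*(a*b))*c)) + (5:ℤ) • ((c*((b*d)*a) - c*(b*(d*a))) - (c*((d*b)*a) - c*(d*(b*a)))) + (2:ℤ) • ((((b*d)*a)*c - (b*(d*a))*c) - (((d*b)*a)*c - (d*(b*a))*c)) + (-2:ℤ) • ((((a*b)*c)*d - (a*(b*c))*d) - (((b*a)*c)*d - (b*(a*c))*d)) + (3:ℤ) • ((((a*c)*b)*d - (a*(c*b))*d) - (((c*a)*b)*d - (c*(a*b))*d)) + (-4:ℤ) • ((((a*b)*c)*d - (a*b)*(c*d)) - (((a*b)*d)*c - (a*b)*(d*c)))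 + (3:ℤ) • (((c*(a*b))*d - c*((a*b)*d)) - ((c*d)*(a*b) - c*(d*(a*b)))) + (-3:ℤ) • ((((a*c)*b)*d - (a*c)*(b*d)) - (((a*c)*d)*b - (a*c)*(d*b))) + (2:ℤ) • (((b*(a*c))*d - b*((a*c)*d)) - ((b*d)*(a*c) - b*(d*(a*c)))) + (-4:ℤ) • ((((a*d)*b)*c - (a*d)*(b*c)) - (((a*d)*c)*b - (a*d)*(c*b))) + (-2:ℤ) • (((b*(a*d))*c - b*((a*d)*c)) - ((b*c)*(a*d) - b*(c*(a*d)))) + (3:ℤ) • ((((b*a)*c)*d - (b*a)*(c*d)) - (((b*a)*d)*c - (b*a)*(d*c))) + (-5:ℤ) • (((c*(b*a))*d - c*((b*a)*d)) - ((c*d)*(b*a) - c*(d*(b*a)))) + (-9:ℤ) • ((((b*c)*a)*d - (b*c)*(a*d)) - (((b*c)*d)*a - (b*c)*(d*a))) + (7:ℤ) • (((a*(b*c))*d - a*((b*c)*d)) - ((a*d)*(b*c) - a*(d*(b*c)))) + (-6:ℤ) • ((((b*d)*a)*c - (b*d)*(a*c)) - (((b*d)*c)*a - (b*d)*(c*a)))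 + (-2:ℤ) • (((a*(b*d))*c - a*((b*d)*c)) - ((a*c)*(b*d) - a*(c*(b*d)))) + (-1:ℤ) • ((((c*a)*b)*d - (c*a)*(b*d)) - (((c*a)*d)*b - (c*a)*(d*b))) + (4:ℤ) • (((b*(c*a))*d - b*((c*a)*d)) - ((b*d)*(c*a) - b*(d*(c*a)))) + (10:ℤ) • ((((c*b)*a)*d - (c*b)*(a*d)) - (((c*b)*d)*a - (c*b)*(d*a))) + (-7:ℤ) • (((a*(c*b))*d - a*((c*b)*d)) - ((a*d)*(c*b) - a*(d*(c*b)))) + (4:ℤ) • ((((c*d)*a)*b - (c*d)*(a*b)) - (((c*d)*b)*a - (c*d)*(b*a))) + (-4:ℤ) • (((a*(c*d))*b - a*((c*d)*b)) - ((a*b)*(c*d) - a*(b*(c*d)))) + (3:ℤ) • ((((d*a)*b)*c - (d*a)*(b*c)) - (((d*a)*c)*b - (d*a)*(c*b))) + (1:ℤ) • (((b*(d*a))*c - b*((d*a)*c)) - ((b*c)*(d*a) - b*(c*(d*a)))) + (5:ℤ) • ((((d*b)*a)*c - (d*b)*(a*c)) - (((d*b)*c)*a - (d*b)*(c*a)))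 + (4:ℤ) • (((a*(d*b))*c - a*((d*b)*c)) - ((a*c)*(d*b) - a*(c*(d*b)))) + (-4:ℤ) • ((((d*c)*a)*b - (d*c)*(a*b)) - (((d*c)*b)*a - (d*c)*(b*a))) + (-1:ℤ) • (((a*(d*c))*b - a*((d*c)*b)) - ((a*b)*(d*c) - a*(b*(d*c)))) + (-3:ℤ) • ((a*((b*c)*d) - a*(b*(c*d))) - (a*((b*d)*c) - a*(b*(d*c)))) + (-4:ℤ) • ((((b*c)*d)*a - (b*(c*d))*a) - (((b*d)*c)*a - (b*(d*c))*a)) + (2:ℤ) • ((a*((c*b)*d) - a*(c*(b*d))) - (a*((c*d)*b) - a*(c*(d*b)))) + (5:ℤ) • ((((c*b)*d)*a - (c*(b*d))*a) - (((c*d)*b)*a - (c*(d*b))*a)) + (-5:ℤ) • ((b*((a*c)*d) - b*(a*(c*d))) - (b*((a*d)*c) - b*(a*(d*c)))) + (1:ℤ) • ((((a*c)*d)*b - (a*(c*d))*b) - (((a*d)*c)*b - (a*(d*c))*b)) + (5:ℤ) • ((b*((c*a)*d) - b*(c*(a*d))) - (b*((c*d)*a) - b*(c*(d*a)))) + (-1:ℤ)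 • ((((c*a)*d)*b - (c*(a*d))*b) - (((c*d)*a)*b - (c*(d*a))*b)) + (-2:ℤ) • ((c*((a*b)*d) - c*(a*(b*d))) - (c*((a*d)*b) - c*(a*(d*b)))) + (-5:ℤ) • ((((a*b)*d)*c - (a*(b*d))*c) - (((a*d)*b)*c - (a*(d*b))*c)) + (-5:ℤ) • ((c*((b*a)*d) - c*(b*(a*d))) - (c*((b*d)*a) - c*(b*(d*a)))) + (-2:ℤ) • (((a*b)*(c*d)) - (c*((a*b)*d))) + (-2:ℤ) • ((c*(d*(a*b))) - (d*(c*(a*b)))) + (2:ℤ) • (((a*b)*(d*c)) - (d*((a*b)*c))) + (-2:ℤ) • (((a*c)*(b*d)) - (b*((a*c)*d))) + (-2:ℤ) • ((b*(d*(a*c))) - (d*(b*(a*c)))) + (2:ℤ) • (((a*c)*(d*b)) - (d*((a*c)*b))) + (2:ℤ) • (((a*d)*(b*c)) - (b*((a*d)*c))) + (2:ℤ) • ((b*(c*(a*d))) - (c*(b*(a*d)))) + (-6:ℤ) • (((a*d)*(c*b)) - (c*((a*d)*b))) + (-2:ℤ) • (((b*a)*(c*d)) - (c*((b*a)*d)))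 + (2:ℤ) • (((b*a)*(d*c)) - (d*((b*a)*c))) + (-2:ℤ) • (((b*c)*(a*d)) - (a*((b*c)*d))) + (-2:ℤ) • ((a*(d*(b*c))) - (d*(a*(b*c)))) + (2:ℤ) • (((b*d)*(a*c)) - (a*((b*d)*c))) + (2:ℤ) • ((a*(c*(b*d))) - (c*(a*(b*d)))) + (2:ℤ) • (((c*a)*(d*b)) - (d*((c*a)*b))) + (6:ℤ) • ((a*(d*(c*b))) - (d*(a*(c*b)))) + (2:ℤ) • (((c*d)*(a*b)) - (a*((c*d)*b))) := by abel
  rw [e0, e1, e2, e3, e4, e5, e6, e7, e8, e9, e10, e11, e12, e13, e14, e15, e16, e17, e18, e19, e20, e21, e22, e23, e24, e25, e26, e27, e28, e29, e30, e31, e32, e33, e34, e35, e36, e37, e38, e39, e40, e41, e42, e43, e44, e45, e46, e47, e48, e49, e50, e51, e52, e53, e54, e55, e56, e57, e58, e59, e60, e61, e62, e63, e64, e65, e66, e67, e68, e69, e70, e71, e72, e73, e74, e75, e76, e77, e78, e79, e80, e81, e82, e83, e84, e85, e86, e87, e88, e89, e90, e91, e92, e93, e94, e95, e96, e97, e98,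 e99] at key
  simp only [smul_zero, add_zero, zero_add] at key
  have key2 : ((8:ℤ):K) • (c*((a*d)*b) - d*((a*c)*b)) = 0 := by
    rw [Int.cast_smul_eq_zsmul]; exact key
  have hne : (((8:ℤ)):K) ≠ 0 := by norm_num
  have := (smul_eq_zero.mp key2).resolve_left hne
  exact sub_eq_zero.mp this
end

section
/- Every alternative algebra satisfying (ab)c = (ba)c for all a, b, c also satisfies ((ab)c)d = ((ac)b)d for all a, b, c, d. -/
theorem stmt14 {K A : Type*} [Field K] [CharZero K] [NonUnitalNonAssocRing A]
    [Module K A] [SMulCommClass K A A] [IsScalarTower K A A]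
    (hL : ∀ a b : A, (a*a)*b = a*(a*b)) (hR : ∀ a b : A, (a*b)*b = a*(b*b))
    (hC : ∀ a b c : A, (a*b)*c = (b*a)*c) :
    ∀ a b c d : A, ((a*b)*c)*d = ((a*c)*b)*d := by
  intro a b c d
  have lin : ∀ x y z : A, (x*y)*z + (y*x)*z = x*(y*z) + y*(x*z) := by
    intro x y z
    have h := hL (x+y) z
    simp only [add_mul, mul_add] at h
    rw [hL x z, hL y z] at h
    linear_combination (norm := abel) h
  have rin : ∀ x y z : A, x*(y*z) + x*(z*y) = (x*y)*z + (x*z)*y := by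
    intro x y z
    have h := hR x (y+z)
    simp only [add_mul, mul_add] at h
    rw [hR x y, hR x z] at h
    linear_combination (norm := abel) (-1:ℤ) • h
  have e0 := (rin (a*b) c d)
  have e1 := (hC (a*b) c d)
  have e2 := (lin (a*b) d c)
  have e3 := (hC (a*b) d c)
  have e4 := (hC (a*c) b d)
  have e5 := (rin (b*a) c d)
  have e6 := (lin (b*a) d c)
  have e7 := (hC (b*a) d c)
  have e8 := (hC (b*c) a d)
  have e9 := (hC (c*a) b d)
  have e10 := (hC a b (c*d))
  have e11 := (hC a b (d*c))
  have e12 := congrArg (· * d) (lin a b c)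
  have e13 := congrArg (· * d) (rin a b c)
  have e14 := congrArg (d * ·) (hC a b c)
  have e15 := congrArg (· * d) (lin a c b)
  have e16 := congrArg (· * d) (rin b a c)
  simp only [add_mul, mul_add] at e12 e13 e14 e15 e16
  have key : (6:ℤ) • (((a*b)*c)*d) = (6:ℤ) • (((a*c)*b)*d) := by
    linear_combination (norm := abel)
      (-6:ℤ) • e0 + (-2:ℤ) • e1 + (-3:ℤ) • e2 + (-3:ℤ) • e3 + (-6:ℤ) • e4 +
      (6:ℤ) • e5 + (3:ℤ) • e6 + (3:ℤ) • e7 + (-2:ℤ) • e8 + (-2:ℤ) • e9 +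
      (6:ℤ) • e10 + (3:ℤ) • e11 + (4:ℤ) • e12 + (2:ℤ) • e13 + (-3:ℤ) • e14 +
      (2:ℤ) • e15 + (-2:ℤ) • e16
  have h6 : ((6:ℤ):K) ≠ 0 := by norm_num
  apply smul_right_injective A h6
  show ((6:ℤ):K) • (((a*b)*c)*d) = ((6:ℤ):K) • (((a*c)*b)*d)
  rw [Int.cast_smul_eq_zsmul, Int.cast_smul_eq_zsmul]
  exact key
end

section
/- Every alternative algebra satisfying (ab)c = (ba)c for all a, b, c also satisfies d((ab)c) = ((ab)d)c for all a, b, c, d. -/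
theorem stmt15 {K A : Type*} [Field K] [CharZero K] [NonUnitalNonAssocRing A]
    [Module K A] [SMulCommClass K A A] [IsScalarTower K A A]
    (hL : ∀ a b : A, (a*a)*b = a*(a*b)) (hR : ∀ a b : A, (a*b)*b = a*(b*b))
    (hC : ∀ a b c : A, (a*b)*c = (b*a)*c) :
    ∀ a b c d : A, d*((a*b)*c) = ((a*b)*d)*c := by
  have LL : ∀ x y z : A, (x*y)*z + (y*x)*z = x*(y*z) + y*(x*z) := by
    intro x y z
    have h := hL (x+y) z
    simp only [add_mul, mul_add] at h
    linear_combination (norm := abel) h - hL x z - hL y z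
  have RR : ∀ x y z : A, x*(y*z) + x*(z*y) = (x*y)*z + (x*z)*y := by
    intro x y z
    have h := hR x (y+z)
    simp only [add_mul, mul_add] at h
    linear_combination (norm := abel) hR x y + hR x z - h
  have CWL : ∀ w x y z : A, w*((x*y)*z) = w*((y*x)*z) := by
    intro w x y z; rw [hC x y z]
  have LWL : ∀ w x y z : A, w*((x*y)*z) + w*((y*x)*z) = w*(x*(y*z)) + w*(y*(x*z)) := by
    intro w x y z
    have h := congrArg (w * ·) (LL x y z)
    simpa only [mul_add] using h
  have LWR : ∀ w x y z : A, ((x*y)*z)*w + ((y*x)*z)*w = (x*(y*z))*w + (y*(x*z))*w := by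
    intro w x y z
    have h := congrArg (· * w) (LL x y z)
    simpa only [add_mul] using h
  have RWL : ∀ w x y z : A, w*(x*(y*z)) + w*(x*(z*y)) = w*((x*y)*z) + w*((x*z)*y) := by
    intro w x y z
    have h := congrArg (w * ·) (RR x y z)
    simpa only [mul_add] using h
  have RWR : ∀ w x y z : A, (x*(y*z))*w + (x*(z*y))*w = ((x*y)*z)*w + ((x*z)*y)*w := by
    intro w x y z
    have h := congrArg (· * w) (RR x y z)
    simpa only [add_mul] using h
  intro a b c d
  have big : (12:ℤ) • (d*((a*b)*c)) = (12:ℤ) • (((a*b)*d)*c) := by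
    linear_combination (norm := abel)
      ((-3:ℤ) • (hC a b (d*c))) +
      ((10:ℤ) • (hC a c (b*d))) +
      ((2:ℤ) • (hC a c (d*b))) +
      ((6:ℤ) • (LL a c (d*b))) +
      ((6:ℤ) • (RR a c (d*b))) +
      ((10:ℤ) • (LL a d (b*c))) +
      ((10:ℤ) • (RR a d (b*c))) +
      ((-2:ℤ) • (hC a d (c*b))) +
      ((-6:ℤ) • (LL a d (c*b))) +
      ((-6:ℤ) • (RR a d (c*b))) +
      ((10:ℤ) • (hC b c (a*d))) +
      ((2:ℤ) • (hC b c (d*a))) +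
      ((6:ℤ) • (LL b c (d*a))) +
      ((6:ℤ) • (RR b c (d*a))) +
      ((10:ℤ) • (LL b d (a*c))) +
      ((10:ℤ) • (RR b d (a*c))) +
      ((-2:ℤ) • (hC b d (c*a))) +
      ((-6:ℤ) • (LL b d (c*a))) +
      ((-6:ℤ) • (RR b d (c*a))) +
      ((-4:ℤ) • (RR c a (b*d))) +
      ((8:ℤ) • (RR c a (d*b))) +
      ((-4:ℤ) • (RR c b (a*d))) +
      ((8:ℤ) • (RR c b (d*a))) +
      ((-4:ℤ) • (hC c d (a*b))) +
      ((8:ℤ) • (LL c d (a*b))) +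
      ((4:ℤ) • (RR c d (a*b))) +
      ((-4:ℤ) • (hC c d (b*a))) +
      ((8:ℤ) • (LL c d (b*a))) +
      ((4:ℤ) • (RR c d (b*a))) +
      ((4:ℤ) • (RR d a (b*c))) +
      ((-8:ℤ) • (RR d a (c*b))) +
      ((4:ℤ) • (RR d b (a*c))) +
      ((-8:ℤ) • (RR d b (c*a))) +
      ((12:ℤ) • (RR d c (a*b))) +
      ((12:ℤ) • (RR d c (b*a))) +
      ((4:ℤ) • (hC a (b*c) d)) +
      ((10:ℤ) • (LL a (b*c) d)) +
      ((-6:ℤ) • (hC a (c*b) d)) +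
      ((-6:ℤ) • (LL a (c*b) d)) +
      ((6:ℤ) • (hC a (b*d) c)) +
      ((6:ℤ) • (hC a (d*b) c)) +
      ((6:ℤ) • (LL a (d*b) c)) +
      ((4:ℤ) • (hC b (a*c) d)) +
      ((10:ℤ) • (LL b (a*c) d)) +
      ((-6:ℤ) • (hC b (c*a) d)) +
      ((-6:ℤ) • (LL b (c*a) d)) +
      ((6:ℤ) • (hC b (a*d) c)) +
      ((6:ℤ) • (hC b (d*a) c)) +
      ((6:ℤ) • (LL b (d*a) c)) +
      ((4:ℤ) • (hC c (a*b) d)) +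
      ((4:ℤ) • (hC c (b*a) d)) +
      ((-2:ℤ) • (hC c (a*d) b)) +
      ((-2:ℤ) • (LL c (a*d) b)) +
      ((4:ℤ) • (hC c (d*a) b)) +
      ((4:ℤ) • (LL c (d*a) b)) +
      ((-2:ℤ) • (hC c (b*d) a)) +
      ((-2:ℤ) • (LL c (b*d) a)) +
      ((4:ℤ) • (hC c (d*b) a)) +
      ((4:ℤ) • (LL c (d*b) a)) +
      ((15:ℤ) • (hC d (a*b) c)) +
      ((-3:ℤ) • (LL d (a*b) c)) +
      ((9:ℤ) • (hC d (b*a) c)) +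
      ((3:ℤ) • (LL d (b*a) c)) +
      ((2:ℤ) • (hC d (a*c) b)) +
      ((2:ℤ) • (LL d (a*c) b)) +
      ((-4:ℤ) • (hC d (c*a) b)) +
      ((-4:ℤ) • (LL d (c*a) b)) +
      ((2:ℤ) • (hC d (b*c) a)) +
      ((2:ℤ) • (LL d (b*c) a)) +
      ((-4:ℤ) • (hC d (c*b) a)) +
      ((-4:ℤ) • (LL d (c*b) a)) +
      ((3:ℤ) • (CWL d a b c)) +
      ((10:ℤ) • (LWR d a b c)) +
      ((6:ℤ) • (RWL d a b c)) +
      ((6:ℤ) • (RWR d a b c)) +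
      ((4:ℤ) • (LWL d a c b)) +
      ((6:ℤ) • (RWL d b a c)) +
      ((6:ℤ) • (RWR d b a c)) +
      ((4:ℤ) • (LWL d b c a)) +
      ((-10:ℤ) • (LWL c a b d)) +
      ((-6:ℤ) • (RWL c a b d)) +
      ((-6:ℤ) • (RWR c a b d)) +
      ((-4:ℤ) • (LWL c a d b)) +
      ((-6:ℤ) • (RWL c b a d)) +
      ((-6:ℤ) • (RWR c b a d)) +
      ((-4:ℤ) • (LWL c b d a))
  have h' : ((12:ℤ):K) • (d*((a*b)*c)) = ((12:ℤ):K) • (((a*b)*d)*c) := by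
    rw [Int.cast_smul_eq_zsmul, Int.cast_smul_eq_zsmul]; exact big
  have h2 : (((12:ℤ):K)⁻¹ * ((12:ℤ):K)) • (d*((a*b)*c))
      = (((12:ℤ):K)⁻¹ * ((12:ℤ):K)) • (((a*b)*d)*c) := by
    rw [mul_smul, mul_smul, h']
  simpa using h2
end

section
/- Every alternative algebra satisfying (ab)c = (ba)c for all a, b, c also satisfies d(c(ab)) = ((ac)d)b for all a, b, c, d. -/
theorem stmt16 {K A : Type*} [Field K] [CharZero K] [NonUnitalNonAssocRing A]
    [Module K A] [SMulCommClass K A A] [IsScalarTower K A A]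
    (hL : ∀ a b : A, (a*a)*b = a*(a*b)) (hR : ∀ a b : A, (a*b)*b = a*(b*b))
    (hC : ∀ a b c : A, (a*b)*c = (b*a)*c) :
    ∀ a b c d : A, d*(c*(a*b)) = ((a*c)*d)*b := by
  have Llin : ∀ u v w : A, (u*v)*w + (v*u)*w = u*(v*w) + v*(u*w) := by
    intro u v w
    have h := hL (u+v) w
    simp only [add_mul, mul_add] at h
    linear_combination (norm := abel1) h - hL u w - hL v w
  have Rlin : ∀ u v w : A, (u*v)*w + (u*w)*v = u*(v*w) + u*(w*v) := by
    intro u v w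
    have h := hR u (v+w)
    simp only [add_mul, mul_add] at h
    linear_combination (norm := abel1) h - hR u v - hR u w
  have LlinL : ∀ x u v w : A, x*((u*v)*w) + x*((v*u)*w) = x*(u*(v*w)) + x*(v*(u*w)) := by
    intro x u v w
    have h := congrArg (x * ·) (Llin u v w)
    simpa only [mul_add] using h
  have LlinR : ∀ x u v w : A, ((u*v)*w)*x + ((v*u)*w)*x = (u*(v*w))*x + (v*(u*w))*x := by
    intro x u v w
    have h := congrArg (· * x) (Llin u v w)
    simpa only [add_mul] using h
  have RlinL : ∀ x u v w : A, x*((u*v)*w) + x*((u*w)*v) = x*(u*(v*w)) + x*(u*(w*v)) := by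
    intro x u v w
    have h := congrArg (x * ·) (Rlin u v w)
    simpa only [mul_add] using h
  have RlinR : ∀ x u v w : A, ((u*v)*w)*x + ((u*w)*v)*x = (u*(v*w))*x + (u*(w*v))*x := by
    intro x u v w
    have h := congrArg (· * x) (Rlin u v w)
    simpa only [add_mul] using h
  intro a b c d
  have key : (6:ℤ) • (d*(c*(a*b))) = (6:ℤ) • (((a*c)*d)*b) := by
    linear_combination (norm := abel1) (-10:ℤ) • (Llin (a*b) c d) + (2:ℤ) • (Llin c d (a*b)) + (-14:ℤ) • (Llin (a*b) d c) + (-2:ℤ) • (Llin (a*c) b d) + (8:ℤ) • (Llin b d (a*c)) + (-8:ℤ) • (Llin (a*c) d b) + (-4:ℤ) • (Llin (a*d) b c) + (6:ℤ) • (Llin b c (a*d)) + (-6:ℤ) • (Llin (a*d) c b) + (-2:ℤ) • (Llin (b*a) c d) + (7:ℤ) • (Llin c d (b*a)) + (-8:ℤ) • (Llin (b*a) d c) + (6:ℤ) • (Llin (b*c) a d) + (14:ℤ) • (Llin a d (b*c)) + (-1:ℤ) • (Llin (b*c) d a) + (4:ℤ) • (Llin (b*d) a c) + (12:ℤ) •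 (Llin a c (b*d)) + (-3:ℤ) • (Llin (b*d) c a) + (-2:ℤ) • (Llin (c*a) b d) + (1:ℤ) • (Llin b d (c*a)) + (-8:ℤ) • (Llin (c*a) d b) + (2:ℤ) • (Llin (c*b) a d) + (8:ℤ) • (Llin a d (c*b)) + (-7:ℤ) • (Llin (c*b) d a) + (2:ℤ) • (Llin (c*d) a b) + (8:ℤ) • (Llin a b (c*d)) + (5:ℤ) • (Llin (c*d) b a) + (6:ℤ) • (Llin (d*a) b c) + (3:ℤ) • (Llin b c (d*a)) + (4:ℤ) • (Llin (d*b) a c) + (6:ℤ) • (Llin a c (d*b)) + (-3:ℤ) • (Llin (d*b) c a) + (2:ℤ) • (Llin a b (d*c)) + (5:ℤ) • (Llin (d*c) b a) + (-14:ℤ) • (LlinL d a b c) + (-8:ℤ) • (LlinR d a b c) + (-6:ℤ) • (LlinL c a b d) + (6:ℤ) • (LlinR c a b d) + (-8:ℤ) • (LlinL d a c b) + (-10:ℤ) • (LlinR d a c b) + (-8:ℤ) • (LlinL b a c d) + (2:ℤ) • (LlinR b a c d) + (-4:ℤ) • (LlinR c a d b) + (-2:ℤ) • (LlinL b a d c)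 + (-7:ℤ) • (LlinL d b c a) + (-6:ℤ) • (LlinR d b c a) + (-6:ℤ) • (LlinL a b c d) + (5:ℤ) • (LlinR a b c d) + (-3:ℤ) • (LlinL c b d a) + (-2:ℤ) • (LlinL a b d c) + (5:ℤ) • (LlinR a b d c) + (5:ℤ) • (LlinL b c d a) + (-5:ℤ) • (LlinR a c d b) + (16:ℤ) • (Rlin (a*b) c d) + (-2:ℤ) • (Rlin c (a*b) d) + (8:ℤ) • (Rlin (a*c) b d) + (-6:ℤ) • (Rlin b (a*c) d) + (14:ℤ) • (Rlin (a*d) b c) + (2:ℤ) • (Rlin b (a*d) c) + (10:ℤ) • (Rlin (b*a) c d) + (-4:ℤ) • (Rlin c (b*a) d) + (2:ℤ) • (Rlin (b*c) a d) + (-12:ℤ) • (Rlin a (b*c) d) + (6:ℤ) • (Rlin (b*d) a c) + (-6:ℤ) • (Rlin a (b*d) c) + (14:ℤ) • (Rlin (c*a) b d) + (-6:ℤ) • (Rlin b (c*a) d) + (4:ℤ) • (Rlin (c*b) a d) + (-8:ℤ) • (Rlin a (c*b) d) + (-2:ℤ) • (Rlin a (c*d) b) + (-8:ℤ) • (Rlin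 b (d*a) c) + (-4:ℤ) • (Rlin (d*b) a c) + (-6:ℤ) • (Rlin a (d*b) c) + (4:ℤ) • (RlinR d a b c) + (-6:ℤ) • (RlinL c a b d) + (2:ℤ) • (RlinR c a b d) + (6:ℤ) • (RlinL d b a c) + (-2:ℤ) • (hC (a*b) c d) + (2:ℤ) • (hC c d (a*b)) + (-10:ℤ) • (hC (a*b) d c) + (8:ℤ) • (hC b d (a*c)) + (-8:ℤ) • (hC (a*c) d b) + (-8:ℤ) • (hC (a*d) b c) + (-8:ℤ) • (hC (a*d) c b) + (2:ℤ) • (hC c d (b*a)) + (-8:ℤ) • (hC (b*a) d c) + (-2:ℤ) • (hC (b*c) a d) + (8:ℤ) • (hC a d (b*c)) + (-6:ℤ) • (hC (b*c) d a) + (-10:ℤ) • (hC (b*d) a c) + (-8:ℤ) • (hC (b*d) c a) + (-2:ℤ) • (hC (c*a) b d) + (8:ℤ) • (hC b d (c*a)) + (-8:ℤ) • (hC (c*a) d b) + (8:ℤ) • (hC a d (c*b)) + (-2:ℤ) • (hC (c*b) d a) + (-2:ℤ) • (hC (c*d) a b) + (-2:ℤ) • (hC (d*a) b c) + (6:ℤ)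 • (hC b c (d*a)) + (2:ℤ) • (hC (d*b) c a)
  have h6 : ((6:ℤ):K) • (d*(c*(a*b))) = ((6:ℤ):K) • (((a*c)*d)*b) := by
    rw [Int.cast_smul_eq_zsmul, Int.cast_smul_eq_zsmul]; exact key
  have h6K : ((6:K) ≠ 0) := by norm_num
  have := congrArg (fun x => (6:K)⁻¹ • x) h6
  simpa [smul_smul, inv_mul_cancel₀ h6K] using this
end
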